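/- arXiv:0711.3871 — 6 statements merged into one kernel-verified Lean document; each statement's English description precedes it below -/
import Mathlib

section
/- Let F be a cubic 2-connected graph and let G = F^Δ be the graph obtained from F by replacing each vertex of F by a triangle. Then for every 3-vertex path L in G, the graph G − L (obtained from G by deleting the three vertices of L and all incident edges) has a Λ-factor. -/
open SimpleGraph

/-- `P` is a `Λ`-factor of the graph `G`: a collection of ordered triples, each of
which is a 3-vertex path of `G` (the first and third entries being the endpoints),
such that every vertex of `G` lies in exactly one triple. -/
def IsLambdaFactor {V : Type*} (G : SimpleGraph V) (P : Set (V × V × V)) : Prop :=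
  (∀ p ∈ P, G.Adj p.1 p.2.1 ∧ G.Adj p.2.1 p.2.2 ∧ p.1 ≠ p.2.2) ∧
  ∀ v : V, ∃! p : V × V × V, p ∈ P ∧ (v = p.1 ∨ v = p.2.1 ∨ v = p.2.2)

/-- `G` has a `Λ`-factor: a spanning collection of pairwise disjoint 3-vertex paths. -/
def HasLambdaFactor {V : Type*} (G : SimpleGraph V) : Prop :=
  ∃ P, IsLambdaFactor G P

/-- `G` is claw-free: it has no induced subgraph isomorphic to `K_{1,3}`. -/
def ClawFree {V : Type*} (G : SimpleGraph V) : Prop :=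
  ∀ x a b c : V, G.Adj x a → G.Adj x b → G.Adj x c →
    a ≠ b → a ≠ c → b ≠ c →
    ¬ G.Adj a b → ¬ G.Adj a c → ¬ G.Adj b c → False

/-- `G` is `k`-connected: it has more than `k` vertices and removing any fewer than
`k` vertices leaves it connected. -/
def KConnected {V : Type*} (k : ℕ) (G : SimpleGraph V) : Prop :=
  k < Nat.card V ∧ ∀ S : Set V, S.ncard < k → (G.induce Sᶜ).Connected

/-- `G` is cubic: every vertex has degree 3. -/
def CubicGraph {V : Type*} (G : SimpleGraph V) : Prop :=
  ∀ v : V, (G.neighborSet v).ncard = 3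

/-- The graph `F^Δ` obtained from `F` by replacing every vertex by a triangle.
Its vertices are the darts of `F`; two darts are adjacent iff they have the same
tail (the triangle edges) or are reverses of each other (the original edges). -/
def TriangleReplacement {V : Type*} (F : SimpleGraph V) : SimpleGraph F.Dart where
  Adj d d' := d ≠ d' ∧ (d.toProd.1 = d'.toProd.1 ∨ d' = d.symm)
  symm := ⟨by
    rintro d d' ⟨hne, h | h⟩
    · exact ⟨hne.symm, Or.inl h.symm⟩
    · subst h
      exact ⟨hne.symm, Or.inr (SimpleGraph.Dart.symm_symm d).symm⟩⟩
  loopless := ⟨fun d h => h.1 rfl⟩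

/-!
The vertices of `F^Δ` are the darts of `F`, and the triangle replacing `v` consists of the three
darts leaving `v`. If `L` is such a triangle, the other triangles form a `Λ`-factor of `F^Δ - L`.
Otherwise `L = a - b - b.symm` with `a` and `b` leaving the same vertex `u`; let `x` be the third
dart leaving `u`. Since `F - u` is connected, it has a path `x.snd = v₀, …, vₖ = b.snd`. Along it,
each `vᵢ` contributes the path `yᵢ - yᵢ.symm - zᵢ`, where `y₀ = x`, `yᵢ₊₁` is the dart from `vᵢ`
to `vᵢ₊₁`, and `zᵢ` is the remaining dart at `vᵢ` (at `vₖ`, the one other than `yₖ.symm` and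
`b.symm`). These paths cover `x` and all darts at the `vᵢ` except `b.symm`, and the triangles at
the vertices off the path and other than `u` cover the rest.
-/

/-- `Q` is a `Λ`-factor of `G.induce S`, with its paths written in the ambient vertex type. -/
structure IsLambdaCover {W : Type*} (G : SimpleGraph W) (S : Set W) (Q : Set (W × W × W)) :
    Prop where
  isPath : ∀ p ∈ Q, G.Adj p.1 p.2.1 ∧ G.Adj p.2.1 p.2.2 ∧ p.1 ≠ p.2.2
  subset : ∀ p ∈ Q, ({p.1, p.2.1, p.2.2} : Set W) ⊆ S
  existsUnique : ∀ v ∈ S, ∃! p, p ∈ Q ∧ v ∈ ({p.1, p.2.1, p.2.2} : Set W)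

namespace IsLambdaCover

variable {W : Type*} {G : SimpleGraph W} {S : Set W} {Q : Set (W × W × W)}

theorem hasLambdaFactor_induce (h : IsLambdaCover G S Q) : HasLambdaFactor (G.induce S) := by
  refine ⟨{p | (p.1.1, p.2.1.1, p.2.2.1) ∈ Q}, fun p hp => ?_, fun v => ?_⟩
  · obtain ⟨h₁, h₂, h₃⟩ := h.isPath _ hp
    exact ⟨h₁, h₂, fun h' => h₃ (congrArg Subtype.val h')⟩
  · obtain ⟨p, ⟨hpQ, hvp⟩, huniq⟩ := h.existsUnique v v.2
    have hpS := h.subset p hpQ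
    refine ⟨(⟨p.1, hpS (by simp)⟩, ⟨p.2.1, hpS (by simp)⟩, ⟨p.2.2, hpS (by simp)⟩),
      ⟨hpQ, ?_⟩, ?_⟩
    · simpa [Subtype.ext_iff] using hvp
    · rintro ⟨x, y, z⟩ ⟨hq, hvq⟩
      have := huniq (x.1, y.1, z.1) ⟨hq, by simpa [Subtype.ext_iff] using hvq⟩
      subst this
      rfl

theorem singleton {x y z : W} (hxy : G.Adj x y) (hyz : G.Adj y z) (hxz : x ≠ z) :
    IsLambdaCover G {x, y, z} {(x, y, z)} where
  isPath := by rintro p rfl; exact ⟨hxy, hyz, hxz⟩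
  subset := by rintro p rfl; rfl
  existsUnique v hv := ⟨(x, y, z), ⟨rfl, hv⟩, fun p hp => hp.1⟩

theorem iUnion {ι : Type*} {S : ι → Set W} {Q : ι → Set (W × W × W)}
    (h : ∀ i, IsLambdaCover G (S i) (Q i)) (hS : Pairwise (Function.onFun Disjoint S)) :
    IsLambdaCover G (⋃ i, S i) (⋃ i, Q i) where
  isPath p hp := by
    obtain ⟨i, hp⟩ := Set.mem_iUnion.1 hp
    exact (h i).isPath p hp
  subset p hp := by
    obtain ⟨i, hp⟩ := Set.mem_iUnion.1 hp
    exact ((h i).subset p hp).trans (Set.subset_iUnion S i)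
  existsUnique v hv := by
    obtain ⟨i, hv⟩ := Set.mem_iUnion.1 hv
    obtain ⟨p, ⟨hpQ, hvp⟩, huniq⟩ := (h i).existsUnique v hv
    refine ⟨p, ⟨Set.mem_iUnion.2 ⟨i, hpQ⟩, hvp⟩, fun p' ⟨hp', hvp'⟩ => ?_⟩
    obtain ⟨j, hp'⟩ := Set.mem_iUnion.1 hp'
    obtain rfl : i = j := by
      by_contra hij
      exact Set.disjoint_left.1 (hS hij) hv ((h j).subset p' hp' hvp')
    exact huniq p' ⟨hp', hvp'⟩

theorem union {S' : Set W} {Q' : Set (W × W × W)} (h : IsLambdaCover G S Q)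
    (h' : IsLambdaCover G S' Q') (hS : Disjoint S S') : IsLambdaCover G (S ∪ S') (Q ∪ Q') := by
  rw [Set.union_eq_iUnion, Set.union_eq_iUnion]
  exact iUnion (Bool.forall_bool.2 ⟨h', h⟩) (pairwise_disjoint_on_bool.2 hS)

end IsLambdaCover

theorem triangleReplacement_adj_of_fst_eq {V : Type*} {F : SimpleGraph V} {d d' : F.Dart}
    (h : d.fst = d'.fst) (hne : d ≠ d') : (TriangleReplacement F).Adj d d' :=
  ⟨hne, Or.inl h⟩

theorem triangleReplacement_adj_symm {V : Type*} {F : SimpleGraph V} (d : F.Dart) :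
    (TriangleReplacement F).Adj d d.symm :=
  ⟨(Dart.symm_ne d).symm, Or.inr rfl⟩

theorem SimpleGraph.Preconnected.exists_isPath_of_induce_compl_singleton {V : Type*}
    {F : SimpleGraph V} {u v w : V} (hconn : (F.induce ({u}ᶜ : Set V)).Preconnected)
    (hv : v ≠ u) (hw : w ≠ u) : ∃ q : F.Walk v w, q.IsPath ∧ u ∉ q.support := by
  classical
  obtain ⟨p⟩ := hconn ⟨v, Set.mem_compl_singleton_iff.2 hv⟩ ⟨w, Set.mem_compl_singleton_iff.2 hw⟩
  obtain ⟨p, hp⟩ := p.toPath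
  have hu : u ∉ (p.map (Embedding.induce ({u}ᶜ : Set V)).toHom).support := by
    rw [Walk.support_map]
    simp
  exact ⟨_, hp.map Subtype.val_injective, hu⟩

namespace CubicGraph

variable {V : Type*} {F : SimpleGraph V}

theorem ncard_setOf_fst_eq (hF : CubicGraph F) (v : V) :
    {d : F.Dart | d.fst = v}.ncard = 3 := by
  rw [← hF v]
  refine Set.ncard_congr (fun d _ => d.snd) (fun d (hd : d.fst = v) => hd ▸ d.adj) ?_ ?_
  · intro d d' hd hd' h
    exact Dart.ext _ _ (Prod.ext (hd.trans hd'.symm) h)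
  · intro w hw
    exact ⟨⟨(v, w), hw⟩, rfl, rfl⟩

theorem setOf_fst_eq_eq_triple (hF : CubicGraph F) {d₁ d₂ d₃ : F.Dart}
    (h₂ : d₂.fst = d₁.fst) (h₃ : d₃.fst = d₁.fst)
    (h₁₂ : d₁ ≠ d₂) (h₁₃ : d₁ ≠ d₃) (h₂₃ : d₂ ≠ d₃) :
    {d : F.Dart | d.fst = d₁.fst} = {d₁, d₂, d₃} := by
  have hfin : {d : F.Dart | d.fst = d₁.fst}.Finite :=
    Set.finite_of_ncard_ne_zero (by rw [hF.ncard_setOf_fst_eq]; norm_num)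
  refine (Set.eq_of_subset_of_ncard_le ?_ ?_ hfin).symm
  · rintro d (rfl | rfl | rfl)
    exacts [rfl, h₂, h₃]
  · rw [hF.ncard_setOf_fst_eq, Set.ncard_eq_three.2 ⟨d₁, d₂, d₃, h₁₂, h₁₃, h₂₃, rfl⟩]

theorem exists_fst_eq_ne_ne (hF : CubicGraph F) {d₁ d₂ : F.Dart} (hne : d₁ ≠ d₂) :
    ∃ d₃ : F.Dart, d₃.fst = d₁.fst ∧ d₁ ≠ d₃ ∧ d₂ ≠ d₃ := by
  by_contra! hno
  have hsub : {d : F.Dart | d.fst = d₁.fst} ⊆ {d₁, d₂} := fun d hd => by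
    by_contra hd'
    simp only [Set.mem_insert_iff, Set.mem_singleton_iff, not_or] at hd'
    exact hd'.2 (hno d hd (Ne.symm hd'.1)).symm
  have := Set.ncard_le_ncard hsub
  rw [hF.ncard_setOf_fst_eq, Set.ncard_pair hne] at this
  omega

theorem exists_isLambdaCover_setOf_fst_eq (hF : CubicGraph F) (v : V) :
    ∃ Q, IsLambdaCover (TriangleReplacement F) {d | d.fst = v} Q := by
  obtain ⟨d₁, d₂, d₃, h₁₂, h₁₃, h₂₃, h⟩ := Set.ncard_eq_three.1 (hF.ncard_setOf_fst_eq v)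
  have hfst : ∀ d ∈ ({d₁, d₂, d₃} : Set F.Dart), d.fst = v := fun d hd => by
    rw [← h] at hd; exact hd
  have h₁ := hfst d₁ (by simp)
  have h₂ := hfst d₂ (by simp)
  have h₃ := hfst d₃ (by simp)
  rw [h]
  exact ⟨_, .singleton (triangleReplacement_adj_of_fst_eq (h₁.trans h₂.symm) h₁₂)
    (triangleReplacement_adj_of_fst_eq (h₂.trans h₃.symm) h₂₃) h₁₃⟩

theorem exists_isLambdaCover_setOf_fst_mem (hF : CubicGraph F) (U : Set V) :
    ∃ Q, IsLambdaCover (TriangleReplacement F) {d | d.fst ∈ U} Q := by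
  choose Q hQ using fun v : U => hF.exists_isLambdaCover_setOf_fst_eq v
  have hU : {d : F.Dart | d.fst ∈ U} = ⋃ v : U, {d : F.Dart | d.fst = (v : V)} := by
    ext d; simp
  rw [hU]
  refine ⟨_, .iUnion hQ fun v w hvw => Set.disjoint_left.2 fun d hv hw => hvw ?_⟩
  exact Subtype.ext (hv.symm.trans hw)

theorem exists_isLambdaCover_compl_triple (hF : CubicGraph F) {a b c : F.Dart}
    (ha : a.fst = b.fst) (hc : c.fst = b.fst) (hab : b ≠ a) (hbc : b ≠ c) (hac : a ≠ c) :
    ∃ Q, IsLambdaCover (TriangleReplacement F) {a, b, c}ᶜ Q := by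
  have hfib := hF.setOf_fst_eq_eq_triple ha hc hab hbc hac
  have hset : ({a, b, c}ᶜ : Set F.Dart) = {d | d.fst ∈ ({b.fst}ᶜ : Set V)} := by
    ext d
    have hd := Set.ext_iff.1 hfib d
    simp only [Set.mem_insert_iff, Set.mem_ofPred_eq, Set.mem_singleton_iff,
      Set.mem_compl_iff] at hd ⊢
    tauto
  exact hset ▸ hF.exists_isLambdaCover_setOf_fst_mem _

theorem exists_isLambdaCover_insert_diff (hF : CubicGraph F) {y o : F.Dart}
    (hyo : y.snd = o.fst) (hne : y.symm ≠ o) :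
    ∃ Q, IsLambdaCover (TriangleReplacement F) (insert y ({d | d.fst = o.fst} \ {o})) Q := by
  obtain ⟨z, hz, hyz, hoz⟩ := hF.exists_fst_eq_ne_ne hne
  have hfib := hF.setOf_fst_eq_eq_triple (d₁ := y.symm) hyo.symm hz hne hyz hoz
  rw [show o.fst = y.symm.fst from hyo.symm, hfib]
  have hz' : z.fst = y.snd := hz
  have hset : insert y (({y.symm, o, z} : Set F.Dart) \ {o}) = {y, y.symm, z} := by
    ext d
    simp only [Set.mem_insert_iff, Set.mem_sdiff, Set.mem_singleton_iff]
    constructor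
    · rintro (rfl | ⟨rfl | rfl | rfl, h⟩)
      exacts [Or.inl rfl, Or.inr (Or.inl rfl), absurd rfl h, Or.inr (Or.inr rfl)]
    · rintro (rfl | rfl | rfl)
      exacts [Or.inl rfl, Or.inr ⟨Or.inl rfl, hne⟩, Or.inr ⟨Or.inr (Or.inr rfl), hoz.symm⟩]
  rw [hset]
  exact ⟨_, .singleton (triangleReplacement_adj_symm y)
    (triangleReplacement_adj_of_fst_eq hz.symm hyz) fun h => y.fst_ne_snd (by rw [← hz', h])⟩

theorem exists_isLambdaCover_of_isPath (hF : CubicGraph F) {o y : F.Dart} {v w : V}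
    (q : F.Walk v w) (hq : q.IsPath) (ho : o.fst = w) (ho' : o.snd ∉ q.support)
    (hy : y.snd = v) (hy' : y.fst ∉ q.support) (hyo : y.symm ≠ o) :
    ∃ Q, IsLambdaCover (TriangleReplacement F) (insert y ({d | d.fst ∈ q.support} \ {o})) Q := by
  induction q generalizing y with
  | nil =>
    subst ho
    simpa using hF.exists_isLambdaCover_insert_diff hy hyo
  | @cons v v' w h q ih =>
    rw [Walk.cons_isPath_iff] at hq
    simp only [Walk.support_cons, List.mem_cons, not_or] at ho' hy'
    set e : F.Dart := ⟨(v, v'), h⟩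
    have hoq : o.fst ∈ q.support := ho ▸ q.end_mem_support
    obtain ⟨Q₁, hQ₁⟩ := hF.exists_isLambdaCover_insert_diff (o := e) hy
      fun h' => hy'.2 (by rw [← y.symm_symm, h']; exact q.start_mem_support)
    obtain ⟨Q₂, hQ₂⟩ := ih (y := e) hq.1 ho ho'.2 rfl hq.2 fun h' => ho'.1 (by rw [← h']; rfl)
    have hset : insert y ({d : F.Dart | d.fst ∈ (Walk.cons h q).support} \ {o}) =
        insert y ({d | d.fst = e.fst} \ {e}) ∪ insert e ({d | d.fst ∈ q.support} \ {o}) := by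
      have hvo : v ≠ o.fst := fun h' => hq.2 (h' ▸ hoq)
      have he : e.fst = v := rfl
      ext d
      simp only [Set.mem_insert_iff, Set.mem_sdiff, Set.mem_ofPred_eq, Set.mem_singleton_iff,
        Walk.support_cons, List.mem_cons]
      grind
    have hdisj : Disjoint (insert y ({d : F.Dart | d.fst = e.fst} \ {e}))
        (insert e ({d | d.fst ∈ q.support} \ {o})) := by
      rw [Set.disjoint_left]
      grind
    exact ⟨_, hset ▸ hQ₁.union hQ₂ hdisj⟩

theorem exists_isLambdaCover_compl_of_fst_eq (hF : CubicGraph F) {a b : F.Dart}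
    (hconn : (F.induce ({b.fst}ᶜ : Set V)).Preconnected) (hab : a ≠ b) (h : a.fst = b.fst) :
    ∃ Q, IsLambdaCover (TriangleReplacement F) {a, b, b.symm}ᶜ Q := by
  obtain ⟨x, hx, hbx, hax⟩ := hF.exists_fst_eq_ne_ne hab.symm
  have hfib := hF.setOf_fst_eq_eq_triple h hx hab.symm hbx hax
  obtain ⟨q, hq, hbq⟩ := hconn.exists_isPath_of_induce_compl_singleton
    (fun h' => x.snd_ne_fst (h'.trans hx.symm)) b.snd_ne_fst
  obtain ⟨Q₁, hQ₁⟩ := hF.exists_isLambdaCover_of_isPath q hq (o := b.symm) (y := x) rfl hbq rfl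
    (hx ▸ hbq) fun h' => hbx (by rw [← b.symm_symm, ← h', x.symm_symm])
  obtain ⟨Q₂, hQ₂⟩ := hF.exists_isLambdaCover_setOf_fst_mem {v | v ∉ q.support ∧ v ≠ b.fst}
  have hbs : b.symm.fst ∈ q.support := q.end_mem_support
  have hset : ({a, b, b.symm}ᶜ : Set F.Dart) = insert x ({d | d.fst ∈ q.support} \ {b.symm}) ∪
      {d | d.fst ∈ {v | v ∉ q.support ∧ v ≠ b.fst}} := by
    ext d
    have hd := Set.ext_iff.1 hfib d
    simp only [Set.mem_insert_iff, Set.mem_sdiff, Set.mem_ofPred_eq, Set.mem_singleton_iff,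
      Set.mem_compl_iff, Set.mem_union] at hd ⊢
    grind
  have hdisj : Disjoint (insert x ({d : F.Dart | d.fst ∈ q.support} \ {b.symm}))
      {d | d.fst ∈ {v | v ∉ q.support ∧ v ≠ b.fst}} := by
    rw [Set.disjoint_left]
    grind
  exact ⟨_, hset ▸ hQ₁.union hQ₂ hdisj⟩

end CubicGraph

theorem stmt_0_general {V : Type*} (F : SimpleGraph V)
    (hcubic : CubicGraph F) (hconn : KConnected 2 F)
    (a b c : F.Dart)
    (hab : (TriangleReplacement F).Adj a b) (hbc : (TriangleReplacement F).Adj b c)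
    (hac : a ≠ c) :
    HasLambdaFactor ((TriangleReplacement F).induce ({a, b, c}ᶜ : Set F.Dart)) := by
  have hconn' : (F.induce ({b.fst}ᶜ : Set V)).Preconnected :=
    (hconn.2 {b.fst} (by simp)).preconnected
  suffices ∃ Q, IsLambdaCover (TriangleReplacement F) {a, b, c}ᶜ Q from
    this.elim fun _ hQ => hQ.hasLambdaFactor_induce
  obtain ⟨hab, hab' | rfl⟩ := hab <;> obtain ⟨hbc, hbc' | rfl⟩ := hbc
  · exact hcubic.exists_isLambdaCover_compl_triple hab' hbc'.symm hab.symm hbc hac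
  · exact hcubic.exists_isLambdaCover_compl_of_fst_eq hconn' hab hab'
  · have hset : ({a, a.symm, c}ᶜ : Set F.Dart) = {c, a.symm, a.symm.symm}ᶜ := by
      rw [a.symm_symm]
      ext d
      simp only [Set.mem_compl_iff, Set.mem_insert_iff, Set.mem_singleton_iff]
      tauto
    exact hset ▸ hcubic.exists_isLambdaCover_compl_of_fst_eq hconn' hbc.symm hbc'.symm
  · exact absurd a.symm_symm.symm hac

/-- if `F` is a cubic 2-connected graph and `G = F^Δ`, then for every
3-vertex path `L = a-b-c` in `G`, the graph `G − L` has a `Λ`-factor. -/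
theorem stmt_0 {V : Type*} [Fintype V] (F : SimpleGraph V)
    (hcubic : CubicGraph F) (hconn : KConnected 2 F)
    (a b c : F.Dart)
    (hab : (TriangleReplacement F).Adj a b) (hbc : (TriangleReplacement F).Adj b c)
    (hac : a ≠ c) :
    HasLambdaFactor ((TriangleReplacement F).induce ({a, b, c}ᶜ : Set F.Dart)) :=
  stmt_0_general F hcubic hconn a b c hab hbc hac
end

section
/- Let F be a cubic 2-connected graph and let G = F^Δ be the graph obtained from F by replacing each vertex of F by a triangle. If L is a 3-vertex path in G whose three vertices induce a triangle in G, then G has a Λ-factor R containing L such that the vertex set of every component 3-vertex path of R induces a triangle in G. -/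
open SimpleGraph

/-!
The triangles of `F^Δ` that replace the vertices of `F` partition its vertex set, and every
triangle of `F^Δ` is one of them, because the darts adjacent to both `d` and `d.symm` would have
tail both `d.fst` and `d.snd`. Listing each of these triangles as a path, with `L` prescribed for
its own triangle, gives the factor.
-/

section Fibers

variable {W ι : Type*} {π : W → ι} {i : ι}

def ListsFiber (π : W → ι) (i : ι) (p : W × W × W) : Prop :=
  p.1 ≠ p.2.1 ∧ p.1 ≠ p.2.2 ∧ p.2.1 ≠ p.2.2 ∧
    ∀ x, π x = i ↔ x = p.1 ∨ x = p.2.1 ∨ x = p.2.2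

lemma ListsFiber.map_eq {p : W × W × W} (h : ListsFiber π i p) :
    π p.1 = i ∧ π p.2.1 = i ∧ π p.2.2 = i :=
  ⟨(h.2.2.2 _).mpr (Or.inl rfl), (h.2.2.2 _).mpr (Or.inr (Or.inl rfl)),
    (h.2.2.2 _).mpr (Or.inr (Or.inr rfl))⟩

lemma exists_listsFiber (hcard : {x | π x = i}.ncard = 3) : ∃ p, ListsFiber π i p := by
  obtain ⟨x, y, z, hxy, hxz, hyz, hfiber⟩ := Set.ncard_eq_three.mp hcard
  exact ⟨(x, y, z), hxy, hxz, hyz, fun w => by simpa using Set.ext_iff.mp hfiber w⟩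

lemma listsFiber_of_mem (hcard : {x | π x = i}.ncard = 3) {a b c : W}
    (ha : π a = i) (hb : π b = i) (hc : π c = i)
    (hab : a ≠ b) (hac : a ≠ c) (hbc : b ≠ c) :
    ListsFiber π i (a, b, c) := by
  have hsub : ({a, b, c} : Set W) ⊆ {x | π x = i} := by
    rintro x (rfl | rfl | rfl) <;> assumption
  have hfiber : ({a, b, c} : Set W) = {x | π x = i} :=
    Set.eq_of_subset_of_ncard_le hsub
      (by rw [hcard, Set.ncard_eq_three.mpr ⟨a, b, c, hab, hac, hbc, rfl⟩])
      (Set.finite_of_ncard_pos (by omega))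
  exact ⟨hab, hac, hbc, fun x => by simpa using (Set.ext_iff.mp hfiber x).symm⟩

theorem exists_lambdaFactor_of_fibers (G : SimpleGraph W)
    (hadj : ∀ x y, x ≠ y → π x = π y → G.Adj x y)
    (hcard : ∀ i, {x | π x = i}.ncard = 3)
    {a b c : W} (h : ListsFiber π (π a) (a, b, c)) :
    ∃ P : Set (W × W × W), IsLambdaFactor G P ∧ (a, b, c) ∈ P ∧
      ∀ p ∈ P, G.Adj p.1 p.2.2 := by
  classical
  choose t ht using fun i => exists_listsFiber (hcard i)
  set t' := Function.update t (π a) (a, b, c)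
  have ht' : ∀ i, ListsFiber π i (t' i) := by
    intro i
    rcases eq_or_ne i (π a) with rfl | hi
    · simpa [t'] using h
    · simpa [t', hi] using ht i
  refine ⟨Set.range t',
    ⟨?paths, fun x => ⟨t' (π x), ⟨⟨_, rfl⟩, ((ht' _).2.2.2 x).mp rfl⟩, ?unique⟩⟩,
    ⟨π a, by simp [t']⟩, ?triangles⟩
  case paths =>
    rintro _ ⟨i, rfl⟩
    obtain ⟨h12, h13, h23, -⟩ := ht' i
    obtain ⟨h1, h2, h3⟩ := (ht' i).map_eq
    exact ⟨hadj _ _ h12 (h1.trans h2.symm), hadj _ _ h23 (h2.trans h3.symm), h13⟩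
  case unique =>
    rintro _ ⟨⟨i, rfl⟩, hx⟩
    rw [((ht' i).2.2.2 x).mpr hx]
  case triangles =>
    rintro _ ⟨i, rfl⟩
    obtain ⟨h1, -, h3⟩ := (ht' i).map_eq
    exact hadj _ _ (ht' i).2.1 (h1.trans h3.symm)

end Fibers

namespace TriangleReplacement

variable {V : Type*} {F : SimpleGraph V}

lemma adj_of_fst_eq {d d' : F.Dart} (hne : d ≠ d') (h : d.fst = d'.fst) :
    (TriangleReplacement F).Adj d d' := ⟨hne, Or.inl h⟩

lemma fst_eq_of_triangle {a b c : F.Dart} (hab : (TriangleReplacement F).Adj a b)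
    (hac : (TriangleReplacement F).Adj a c) (hbc : (TriangleReplacement F).Adj b c) :
    a.fst = b.fst := by
  rcases hab.2 with h | rfl
  · exact h
  have hca : c.fst = a.fst := by
    rcases hac.2 with h | rfl
    · exact h.symm
    · exact absurd rfl hbc.1
  have hcb : c.fst = a.snd := by
    rcases hbc.2 with h | h
    · exact h.symm
    · exact absurd (h.trans (Dart.symm_symm a)).symm hac.1
  exact absurd (hca.symm.trans hcb) a.fst_ne_snd

lemma ncard_fst_fiber (v : V) :
    {d : F.Dart | d.fst = v}.ncard = (F.neighborSet v).ncard := by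
  have hrange : {d : F.Dart | d.fst = v} = Set.range (F.dartOfNeighborSet v) := by
    ext d
    refine ⟨fun (h : d.fst = v) => ⟨⟨d.snd, h ▸ d.adj⟩, ?_⟩, by rintro ⟨w, rfl⟩; rfl⟩
    exact Dart.ext _ _ (Prod.ext h.symm rfl)
  rw [hrange, Set.ncard_range_of_injective (F.dartOfNeighborSet_injective v),
    Nat.card_coe_set_eq]

end TriangleReplacement

theorem stmt_1_general {V : Type*} (F : SimpleGraph V)
    (hcubic : CubicGraph F)
    (a b c : F.Dart)
    (hab : (TriangleReplacement F).Adj a b) (hbc : (TriangleReplacement F).Adj b c)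
    (hac : a ≠ c) (htri : (TriangleReplacement F).Adj a c) :
    ∃ P : Set (F.Dart × F.Dart × F.Dart),
      IsLambdaFactor (TriangleReplacement F) P ∧
      ((a, b, c) ∈ P ∨ (c, b, a) ∈ P) ∧
      ∀ p ∈ P, (TriangleReplacement F).Adj p.1 p.2.2 := by
  have hcard (v : V) : {d : F.Dart | d.fst = v}.ncard = 3 :=
    (TriangleReplacement.ncard_fst_fiber v).trans (hcubic v)
  have hfst_ab := TriangleReplacement.fst_eq_of_triangle hab htri hbc
  have hfst_bc := TriangleReplacement.fst_eq_of_triangle hbc hab.symm htri.symm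
  obtain ⟨P, hP, habc, htriangles⟩ :=
    exists_lambdaFactor_of_fibers (TriangleReplacement F)
      (fun _ _ => TriangleReplacement.adj_of_fst_eq) hcard
      (listsFiber_of_mem (hcard _) rfl hfst_ab.symm (hfst_ab.trans hfst_bc).symm
        hab.1 hac hbc.1)
  exact ⟨P, hP, Or.inl habc, htriangles⟩

/-- if `F` is a cubic 2-connected graph, `G = F^Δ`, and `L = a-b-c` is a
3-vertex path in `G` whose vertices induce a triangle, then `G` has a `Λ`-factor
containing `L` all of whose components induce triangles in `G`. -/
theorem stmt_1 {V : Type*} [Fintype V] (F : SimpleGraph V)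
    (hcubic : CubicGraph F) (hconn : KConnected 2 F)
    (a b c : F.Dart)
    (hab : (TriangleReplacement F).Adj a b) (hbc : (TriangleReplacement F).Adj b c)
    (hac : a ≠ c) (htri : (TriangleReplacement F).Adj a c) :
    ∃ P : Set (F.Dart × F.Dart × F.Dart),
      IsLambdaFactor (TriangleReplacement F) P ∧
      ((a, b, c) ∈ P ∨ (c, b, a) ∈ P) ∧
      ∀ p ∈ P, (TriangleReplacement F).Adj p.1 p.2.2 :=
  stmt_1_general F hcubic a b c hab hbc hac htri
end

section
/- Let F be a cubic 2-connected graph and let G = F^Δ be the graph obtained from F by replacing each vertex of F by a triangle. If L is a 3-vertex path in G whose three vertices do not induce a triangle in G, then G has a Λ-factor R containing L such that at least one component 3-vertex path of R has vertex set inducing a triangle in G. -/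
open SimpleGraph

/-!
Since `L` is not a triangle it uses exactly one edge of `F`, so `L = b̄ – b – f` with `b`, `f` two
darts leaving a vertex `u` of `F` (`b̄` the reverse of `b`); let `d` be the third dart at `u`.
A shortest path `q` in `F - u` from the head of `d` to the head of `b` closes up through `u` into
a cycle `C` of `F`, and `C` misses some vertex: if `q` covered `F - u`, its first vertex would have
no neighbour besides `u` and the second vertex of `q`.
Orient `C` along `d`. Each dart `e` of `C`, followed by its reverse `ē` and by the third dart at the
head of `e` (neither `ē` nor on `C`), is a 3-vertex path of `F^Δ`; these paths, together with the
triangles of the vertices off `C`, form a `Λ`-factor. It contains `L` as the path of the dart `b̄`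
of `C`, and has a triangle component at a vertex off `C`.
-/

namespace SimpleGraph

variable {V : Type*} {G : SimpleGraph V}

theorem triangleReplacement_adj {d d' : G.Dart} :
    (TriangleReplacement G).Adj d d' ↔ d ≠ d' ∧ (d.fst = d'.fst ∨ d' = d.symm) := Iff.rfl

def ListsDartsFrom (G : SimpleGraph V) (v : V) (t : G.Dart × G.Dart × G.Dart) : Prop :=
  t.1 ≠ t.2.1 ∧ t.1 ≠ t.2.2 ∧ t.2.1 ≠ t.2.2 ∧
    ∀ e : G.Dart, e.fst = v ↔ e = t.1 ∨ e = t.2.1 ∨ e = t.2.2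

theorem _root_.CubicGraph.exists_listsDartsFrom (hG : CubicGraph G) (v : V) :
    ∃ t, G.ListsDartsFrom v t := by
  obtain ⟨x, y, z, hxy, hxz, hyz, hxyz⟩ := Set.ncard_eq_three.mp (hG v)
  have hadj : ∀ m ∈ ({x, y, z} : Set V), G.Adj v m := fun m hm => by rwa [← hxyz] at hm
  refine ⟨(⟨(v, x), hadj x (by simp)⟩, ⟨(v, y), hadj y (by simp)⟩, ⟨(v, z), hadj z (by simp)⟩),
    by simpa [Dart.ext_iff], by simpa [Dart.ext_iff], by simpa [Dart.ext_iff], fun e => ?_⟩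
  have hsnd : e.fst = v → e.snd ∈ ({x, y, z} : Set V) := fun he => hxyz ▸ he ▸ e.adj
  simp only [Dart.ext_iff, Prod.ext_iff]
  aesop

namespace ListsDartsFrom

variable {v : V} {t : G.Dart × G.Dart × G.Dart}

theorem exists_ne_ne (ht : G.ListsDartsFrom v t) (g₁ g₂ : G.Dart) :
    ∃ f : G.Dart, f.fst = v ∧ f ≠ g₁ ∧ f ≠ g₂ := by
  obtain ⟨h12, h13, h23, hfst⟩ := ht
  by_contra! h
  have h1 := h t.1 ((hfst _).2 (by simp))
  have h2 := h t.2.1 ((hfst _).2 (by simp))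
  have h3 := h t.2.2 ((hfst _).2 (by simp))
  by_cases t.1 = g₁ <;> by_cases t.2.1 = g₁ <;> by_cases t.2.2 = g₁ <;> simp_all

theorem eq_of_ne {g₁ g₂ f f' : G.Dart} (ht : G.ListsDartsFrom v t) (hg : g₁ ≠ g₂)
    (hg₁ : g₁.fst = v) (hg₂ : g₂.fst = v) (hf : f.fst = v) (hf' : f'.fst = v)
    (hf₁ : f ≠ g₁) (hf₂ : f ≠ g₂) (hf'₁ : f' ≠ g₁) (hf'₂ : f' ≠ g₂) : f = f' := by
  obtain ⟨h12, h13, h23, hfst⟩ := ht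
  rw [hfst] at hg₁ hg₂ hf hf'
  rcases hg₁ with rfl | rfl | rfl <;> rcases hg₂ with rfl | rfl | rfl <;>
    rcases hf with rfl | rfl | rfl <;> rcases hf' with rfl | rfl | rfl <;> simp_all

theorem isLambdaPath (ht : G.ListsDartsFrom v t) :
    (TriangleReplacement G).Adj t.1 t.2.1 ∧ (TriangleReplacement G).Adj t.2.1 t.2.2 ∧
      (TriangleReplacement G).Adj t.1 t.2.2 := by
  obtain ⟨h12, h13, h23, hfst⟩ := ht
  have h1 := (hfst t.1).2 (by simp)
  have h2 := (hfst t.2.1).2 (by simp)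
  have h3 := (hfst t.2.2).2 (by simp)
  simp only [triangleReplacement_adj]
  exact ⟨⟨h12, Or.inl (h1.trans h2.symm)⟩, ⟨h23, Or.inl (h2.trans h3.symm)⟩,
    ⟨h13, Or.inl (h1.trans h3.symm)⟩⟩

end ListsDartsFrom

theorem Walk.neighborSet_subset_of_length_eq_dist {x w : V} (q : G.Walk x w)
    (hq : q.length = G.dist x w) (hcover : ∀ v, v ∈ q.support) :
    G.neighborSet x ⊆ {q.getVert 1} := by
  intro m (hm : G.Adj x m)
  obtain ⟨j, rfl, hj⟩ := Walk.mem_support_iff_exists_getVert.mp (hcover m)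
  have hshortcut := G.dist_le (Walk.cons hm (q.drop j))
  rw [Walk.length_cons, Walk.drop_length, ← hq] at hshortcut
  obtain rfl | rfl : j = 0 ∨ j = 1 := by omega
  · exact absurd hm (by simp)
  · rfl

theorem _root_.CubicGraph.exists_isPath_notMem_support (hG : CubicGraph G)
    (hconn : KConnected 2 G) {u x w : V} (hxu : x ≠ u) (hwu : w ≠ u) :
    ∃ q : G.Walk x w, q.IsPath ∧ u ∉ q.support ∧ ∃ y, y ≠ u ∧ y ∉ q.support := by
  have hx : x ∈ ({u}ᶜ : Set V) := hxu
  have hw : w ∈ ({u}ᶜ : Set V) := hwu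
  obtain ⟨q, hq⟩ := (hconn.2 {u} (by simp)).exists_walk_length_eq_dist ⟨x, hx⟩ ⟨w, hw⟩
  let q' : G.Walk x w := q.map (Embedding.induce _).toHom
  have hsupport : q'.support = q.support.map Subtype.val := Walk.support_map _ _
  refine ⟨q', (q.isPath_of_length_eq_dist hq).map Subtype.val_injective, by simp [hsupport], ?_⟩
  by_contra! hcover
  have hnbr : G.neighborSet x ⊆ {u, (q.getVert 1).1} := by
    intro m hm
    by_cases hmu : m = u
    · exact Or.inl hmu
    have hmq := q.neighborSet_subset_of_length_eq_dist hq
      (fun v => by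
        have := hcover v v.2
        rwa [hsupport, List.mem_map_of_injective Subtype.val_injective] at this)
      (show (G.induce {u}ᶜ).Adj ⟨x, hx⟩ ⟨m, hmu⟩ from hm)
    exact Or.inr (congrArg Subtype.val hmq)
  have := (Set.ncard_le_ncard hnbr).trans (Set.ncard_insert_le _ _)
  rw [hG x, Set.ncard_singleton] at this
  omega

/-- `D` is the set of darts of vertex-disjoint directed cycles of length at least `3`. -/
structure IsDisjointDicycles (D : Set G.Dart) : Prop where
  symm_notMem : ∀ e ∈ D, e.symm ∉ D
  fst_injOn : Set.InjOn (fun e : G.Dart => e.fst) D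
  snd_injOn : Set.InjOn (fun e : G.Dart => e.snd) D
  exists_fst_eq_snd : ∀ e ∈ D, ∃ e' ∈ D, e'.fst = e.snd
  exists_snd_eq_fst : ∀ e ∈ D, ∃ e' ∈ D, e'.snd = e.fst

theorem Walk.IsCycle.isDisjointDicycles {u : V} {C : G.Walk u u} (hC : C.IsCycle) :
    IsDisjointDicycles {e | e ∈ C.darts} := by
  have hsnd : C.darts.map (·.snd) = C.support.tail := C.map_snd_darts
  have hfst : C.darts.map (·.fst) = C.support.dropLast := C.map_fst_darts
  have hperm := C.tail_support_perm_dropLast_support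
  refine ⟨fun e he he' => ?_, fun e he e' he' h => ?_, fun e he e' he' h => ?_,
    fun e he => ?_, fun e he => ?_⟩
  · have hedges : (C.darts.map Dart.edge).Nodup := hC.edges_nodup
    exact e.symm_ne (List.inj_on_of_nodup_map hedges he' he e.edge_symm)
  · exact List.inj_on_of_nodup_map (hfst ▸ hC.nodup_dropLast_support) he he' h
  · exact List.inj_on_of_nodup_map (hsnd ▸ hC.support_nodup) he he' h
  · have : e.snd ∈ C.darts.map (·.fst) := hfst ▸ hperm.subset (hsnd ▸ List.mem_map_of_mem he)
    simpa using this
  · have : e.fst ∈ C.darts.map (·.snd) := hsnd ▸ hperm.symm.subset (hfst ▸ List.mem_map_of_mem he)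
    simpa using this

def dicycleTriples (D : Set G.Dart) : Set (G.Dart × G.Dart × G.Dart) :=
  {p | p.1 ∈ D ∧ p.2.1 = p.1.symm ∧ p.2.2.fst = p.1.snd ∧ p.2.2 ≠ p.1.symm ∧ p.2.2 ∉ D}

def dicycleLambdaFactor (D : Set G.Dart) (τ : V → G.Dart × G.Dart × G.Dart) :
    Set (G.Dart × G.Dart × G.Dart) :=
  dicycleTriples D ∪ τ '' ((fun e : G.Dart => e.snd) '' D)ᶜ

namespace IsDisjointDicycles

variable {D : Set G.Dart} {τ : V → G.Dart × G.Dart × G.Dart}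

theorem exists_mem_dicycleTriples (hD : IsDisjointDicycles D)
    (hτ : ∀ v, G.ListsDartsFrom v (τ v)) {e : G.Dart} (he : e ∈ D) :
    ∃ f, (e, e.symm, f) ∈ dicycleTriples D := by
  obtain ⟨e', he', he'fst⟩ := hD.exists_fst_eq_snd e he
  obtain ⟨f, hf, hfe, hfe'⟩ := (hτ e.snd).exists_ne_ne e.symm e'
  exact ⟨f, he, rfl, hf, hfe,
    fun hfD => hfe' (hD.fst_injOn hfD he' (hf.trans he'fst.symm))⟩

theorem dicycleTriples_eq_of_fst_eq (hD : IsDisjointDicycles D)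
    (hτ : ∀ v, G.ListsDartsFrom v (τ v)) {p p' : G.Dart × G.Dart × G.Dart}
    (hp : p ∈ dicycleTriples D) (hp' : p' ∈ dicycleTriples D) (h : p.1 = p'.1) : p = p' := by
  obtain ⟨hpD, hp2, hp3, hp3s, hp3D⟩ := hp
  obtain ⟨-, hp'2, hp'3, hp'3s, hp'3D⟩ := hp'
  obtain ⟨e', he', he'fst⟩ := hD.exists_fst_eq_snd p.1 hpD
  have hsymm : p.1.symm ≠ e' := fun h => hD.symm_notMem _ hpD (h ▸ he')
  have hthird : p.2.2 = p'.2.2 :=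
    (hτ p.1.snd).eq_of_ne hsymm rfl he'fst hp3 (h ▸ hp'3) hp3s
      (fun h => hp3D (h ▸ he')) (h ▸ hp'3s) (fun h => hp'3D (h ▸ he'))
  ext1
  · exact h
  · ext1 <;> simp_all

theorem mem_or_of_mem_dicycleTriples (hD : IsDisjointDicycles D)
    {p : G.Dart × G.Dart × G.Dart} (hp : p ∈ dicycleTriples D) {e : G.Dart}
    (he : e = p.1 ∨ e = p.2.1 ∨ e = p.2.2) :
    (e ∈ D ∧ p.1 = e) ∨ (e ∉ D ∧ p.1.snd = e.fst) := by
  obtain ⟨hpD, hp2, hp3, -, hp3D⟩ := hp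
  rcases he with rfl | rfl | rfl
  · exact Or.inl ⟨hpD, rfl⟩
  · rw [hp2]
    exact Or.inr ⟨hD.symm_notMem _ hpD, rfl⟩
  · exact Or.inr ⟨hp3D, hp3.symm⟩

theorem fst_mem_image_snd_of_mem_dicycleTriples (hD : IsDisjointDicycles D)
    {p : G.Dart × G.Dart × G.Dart} (hp : p ∈ dicycleTriples D) {e : G.Dart}
    (he : e = p.1 ∨ e = p.2.1 ∨ e = p.2.2) : e.fst ∈ (fun e : G.Dart => e.snd) '' D := by
  rcases hD.mem_or_of_mem_dicycleTriples hp he with ⟨heD, -⟩ | ⟨-, h⟩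
  · exact hD.exists_snd_eq_fst e heD
  · exact ⟨p.1, hp.1, h⟩

theorem eq_of_mem_dicycleLambdaFactor (hD : IsDisjointDicycles D)
    (hτ : ∀ v, G.ListsDartsFrom v (τ v)) {e : G.Dart} {p p' : G.Dart × G.Dart × G.Dart}
    (hp : p ∈ dicycleLambdaFactor D τ) (hp' : p' ∈ dicycleLambdaFactor D τ)
    (he : e = p.1 ∨ e = p.2.1 ∨ e = p.2.2) (he' : e = p'.1 ∨ e = p'.2.1 ∨ e = p'.2.2) :
    p = p' := by
  have hτe : ∀ v, (e = (τ v).1 ∨ e = (τ v).2.1 ∨ e = (τ v).2.2) → e.fst = v :=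
    fun v => ((hτ v).2.2.2 e).2
  rcases hp with hp | ⟨v, hv, rfl⟩ <;> rcases hp' with hp' | ⟨v', hv', rfl⟩
  · apply hD.dicycleTriples_eq_of_fst_eq hτ hp hp'
    rcases hD.mem_or_of_mem_dicycleTriples hp he with ⟨heD, h⟩ | ⟨heD, h⟩ <;>
      rcases hD.mem_or_of_mem_dicycleTriples hp' he' with ⟨heD', h'⟩ | ⟨heD', h'⟩
    · exact h.trans h'.symm
    · exact absurd heD heD'
    · exact absurd heD' heD
    · exact hD.snd_injOn hp.1 hp'.1 (h.trans h'.symm)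
  · exact absurd (hτe v' he' ▸ hD.fst_mem_image_snd_of_mem_dicycleTriples hp he) hv'
  · exact absurd (hτe v he ▸ hD.fst_mem_image_snd_of_mem_dicycleTriples hp' he') hv
  · rw [← hτe v he, ← hτe v' he']

theorem exists_mem_dicycleLambdaFactor (hD : IsDisjointDicycles D)
    (hτ : ∀ v, G.ListsDartsFrom v (τ v)) (e : G.Dart) :
    ∃ p ∈ dicycleLambdaFactor D τ, e = p.1 ∨ e = p.2.1 ∨ e = p.2.2 := by
  by_cases hv : e.fst ∈ (fun e : G.Dart => e.snd) '' D
  · obtain ⟨g, hg, hge⟩ := hv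
    by_cases heD : e ∈ D
    · obtain ⟨f, hf⟩ := hD.exists_mem_dicycleTriples hτ heD
      exact ⟨_, Or.inl hf, Or.inl rfl⟩
    by_cases hes : e = g.symm
    · obtain ⟨f, hf⟩ := hD.exists_mem_dicycleTriples hτ hg
      exact ⟨_, Or.inl hf, Or.inr (Or.inl hes)⟩
    · exact ⟨(g, g.symm, e), Or.inl ⟨hg, rfl, hge.symm, hes, heD⟩, Or.inr (Or.inr rfl)⟩
  · exact ⟨τ e.fst, Or.inr ⟨e.fst, hv, rfl⟩, ((hτ e.fst).2.2.2 e).1 rfl⟩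

theorem isLambdaFactor_dicycleLambdaFactor (hD : IsDisjointDicycles D)
    (hτ : ∀ v, G.ListsDartsFrom v (τ v)) :
    IsLambdaFactor (TriangleReplacement G) (dicycleLambdaFactor D τ) := by
  refine ⟨?_, fun e => ?_⟩
  · rintro p (⟨hpD, hp2, hp3, hp3s, hp3D⟩ | ⟨v, -, rfl⟩)
    · rw [hp2]
      exact ⟨⟨p.1.symm_ne.symm, Or.inr rfl⟩, ⟨hp3s.symm, Or.inl hp3.symm⟩,
        fun h => hp3D (h ▸ hpD)⟩
    · obtain ⟨h12, h23, h13⟩ := (hτ v).isLambdaPath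
      exact ⟨h12, h23, h13.ne⟩
  obtain ⟨p, hp, he⟩ := hD.exists_mem_dicycleLambdaFactor hτ e
  exact ⟨p, ⟨hp, he⟩, fun p' ⟨hp', he'⟩ => hD.eq_of_mem_dicycleLambdaFactor hτ hp' hp he' he⟩

end IsDisjointDicycles

theorem _root_.CubicGraph.exists_isCycle_mem_darts (hG : CubicGraph G) (hconn : KConnected 2 G)
    {b d : G.Dart} (hd : d.fst = b.fst) (hdb : d ≠ b) :
    ∃ C : G.Walk d.fst d.fst, C.IsCycle ∧ d ∈ C.darts ∧ b.symm ∈ C.darts ∧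
      ∃ y, ∀ e ∈ C.darts, e.snd ≠ y := by
  obtain ⟨q, hq, hu, y, hyu, hyq⟩ :=
    hG.exists_isPath_notMem_support hconn (hd ▸ d.adj.ne.symm) b.adj.ne.symm
  have hwu : G.Adj b.snd d.fst := hd ▸ b.adj.symm
  let C : G.Walk d.fst d.fst := Walk.cons d.adj (q.concat hwu)
  have hC : C.IsCycle := by
    refine (Walk.cons_isCycle_iff _ _).mpr ⟨hq.concat (hd ▸ hu) hwu, fun hmem => ?_⟩
    rw [Walk.edges_concat, List.concat_eq_append, List.mem_append, List.mem_singleton] at hmem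
    rcases hmem with hmem | hmem
    · exact hu (hd ▸ q.fst_mem_support_of_mem_edges hmem)
    · rcases Sym2.eq_iff.mp hmem with ⟨h, -⟩ | ⟨-, h⟩
      · exact hwu.ne h.symm
      · exact hdb (Dart.ext _ _ (Prod.ext hd h))
  have hlast : (⟨(b.snd, d.fst), hwu⟩ : G.Dart) = b.symm := Dart.ext _ _ (Prod.ext rfl hd)
  refine ⟨C, hC, by simp [C], by simp [C, hlast], y, fun e he hey => ?_⟩
  have := C.dart_snd_mem_support_of_mem_darts he
  simp only [C, Walk.support_cons, Walk.support_concat, List.mem_cons, List.mem_append,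
    List.not_mem_nil, or_false, hey] at this
  rcases this with h | h | h
  exacts [hyu (h.trans hd), hyq h, hyu (h.trans hd)]

end SimpleGraph

theorem exists_lambdaFactor_symm_mem_of_fst_eq {V : Type*} {F : SimpleGraph V}
    (hcubic : CubicGraph F) (hconn : KConnected 2 F) {b f : F.Dart} (hfb : f.fst = b.fst)
    (hne : f ≠ b) :
    ∃ P : Set (F.Dart × F.Dart × F.Dart), IsLambdaFactor (TriangleReplacement F) P ∧
      (b.symm, b, f) ∈ P ∧ ∃ p ∈ P, (TriangleReplacement F).Adj p.1 p.2.2 := by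
  choose τ hτ using hcubic.exists_listsDartsFrom
  obtain ⟨d, hd, hdb, hdf⟩ := (hτ b.fst).exists_ne_ne b f
  obtain ⟨C, hC, hdC, hbC, y, hy⟩ := hcubic.exists_isCycle_mem_darts hconn hd hdb
  set D : Set F.Dart := {e | e ∈ C.darts}
  have hD : IsDisjointDicycles D := hC.isDisjointDicycles
  have hfD : f ∉ D := fun hfD => hdf (hD.fst_injOn hfD hdC (hfb.trans hd.symm)).symm
  exact ⟨dicycleLambdaFactor D τ, hD.isLambdaFactor_dicycleLambdaFactor hτ,
    Or.inl ⟨hbC, rfl, hfb, hne, hfD⟩, τ y, Or.inr ⟨y, fun ⟨e, he, hey⟩ => hy e he hey, rfl⟩,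
    (hτ y).isLambdaPath.2.2⟩

theorem stmt_3_general {V : Type*} (F : SimpleGraph V)
    (hcubic : CubicGraph F) (hconn : KConnected 2 F)
    (a b c : F.Dart)
    (hab : (TriangleReplacement F).Adj a b) (hbc : (TriangleReplacement F).Adj b c)
    (hac : a ≠ c) (htri : ¬ (TriangleReplacement F).Adj a c) :
    ∃ P : Set (F.Dart × F.Dart × F.Dart),
      IsLambdaFactor (TriangleReplacement F) P ∧
      ((a, b, c) ∈ P ∨ (c, b, a) ∈ P) ∧
      ∃ p ∈ P, (TriangleReplacement F).Adj p.1 p.2.2 := by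
  obtain ⟨hab, hab' | rfl⟩ := hab <;> obtain ⟨hbc, hbc' | rfl⟩ := hbc
  · exact absurd ⟨hac, Or.inl (hab'.trans hbc')⟩ htri
  · obtain ⟨P, hP, hL, hT⟩ := exists_lambdaFactor_symm_mem_of_fst_eq hcubic hconn hab' hab
    exact ⟨P, hP, Or.inr hL, hT⟩
  · obtain ⟨P, hP, hL, hT⟩ :=
      exists_lambdaFactor_symm_mem_of_fst_eq hcubic hconn hbc'.symm hbc.symm
    exact ⟨P, hP, Or.inl hL, hT⟩
  · exact absurd a.symm_symm.symm hac

/-- if `F` is a cubic 2-connected graph, `G = F^Δ`, and `L = a-b-c` is a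
3-vertex path in `G` whose vertices do not induce a triangle, then `G` has a
`Λ`-factor containing `L` at least one of whose components induces a triangle in `G`. -/
theorem stmt_3 {V : Type*} [Fintype V] (F : SimpleGraph V)
    (hcubic : CubicGraph F) (hconn : KConnected 2 F)
    (a b c : F.Dart)
    (hab : (TriangleReplacement F).Adj a b) (hbc : (TriangleReplacement F).Adj b c)
    (hac : a ≠ c) (htri : ¬ (TriangleReplacement F).Adj a c) :
    ∃ P : Set (F.Dart × F.Dart × F.Dart),
      IsLambdaFactor (TriangleReplacement F) P ∧
      ((a, b, c) ∈ P ∨ (c, b, a) ∈ P) ∧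
      ∃ p ∈ P, (TriangleReplacement F).Adj p.1 p.2.2 :=
  stmt_3_general F hcubic hconn a b c hab hbc hac htri
end

section
/- Let A be a graph such that: (c1) A is connected; (c2) every vertex of A has degree at most 3; (c3) every vertex of A of degree 2 or 3 belongs to exactly one triangle of A; and (c4) A has exactly three vertices of degree 1. Then A has no Λ-factor. -/
open SimpleGraph

/-- `t` is a triangle of `G`: a set of three pairwise adjacent vertices. -/
def IsTriangleSet {V : Type*} (G : SimpleGraph V) (t : Finset V) : Prop :=
  t.card = 3 ∧ ∀ u ∈ t, ∀ w ∈ t, u ≠ w → G.Adj u w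

/-!
In a Λ-factor there are `|V| / 3` paths. Every vertex has a neighbour on its path, so the
vertices of degree at least 2 are all but the three leaves; the triangles partition them,
hence there are `|V| / 3 - 1` triangles. On the other hand the middle vertex of each path
has degree at least 2 and so lies in a triangle, and no triangle contains the middles `x, y`
of two different paths: as `x` has degree at most 3 and its neighbour `y` is off its path,
the third vertex of the triangle is an endpoint of the path through `x`, and likewise of the
path through `y`. So there are at least as many triangles as paths.
-/

section

open Finset

theorem Set.ncard_eq_mul_ncard_of_existsUnique {α β : Type*} [Finite α] [Finite β]
    {u : Set α} {s : Set β} {r : α → β → Prop} {k : ℕ}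
    (hu : ∀ a ∈ u, ∃! b, b ∈ s ∧ r a b) (hs : ∀ b ∈ s, {a | a ∈ u ∧ r a b}.ncard = k) :
    u.ncard = k * s.ncard := by
  classical
  have := Fintype.ofFinite α
  have := Fintype.ofFinite β
  rw [Set.ncard_eq_toFinset_card' u, Set.ncard_eq_toFinset_card' s, mul_comm]
  simpa using card_mul_eq_card_mul r (m := 1) (n := k)
    (fun a ha => by
      rw [card_eq_one_iff_existsUnique]
      simpa [bipartiteAbove] using hu a (by simpa using ha))
    (fun b hb => by
      rw [← hs b (by simpa using hb), ← Set.ncard_coe_finset]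
      congr 1
      ext
      simp [bipartiteBelow])

variable {V : Type*} {G : SimpleGraph V}

namespace SimpleGraph

theorem two_le_ncard_neighborSet [Finite V] {v a b : V} (ha : G.Adj v a) (hb : G.Adj v b)
    (hab : a ≠ b) : 2 ≤ (G.neighborSet v).ncard := by
  rw [← Set.ncard_pair hab]
  exact Set.ncard_le_ncard (by simp [Set.insert_subset_iff, ha, hb])

theorem eq_or_eq_of_adj_of_ncard_neighborSet_le_three [Finite V] {x y z a b : V}
    (hx : (G.neighborSet x).ncard ≤ 3) (ha : G.Adj x a) (hb : G.Adj x b) (hy : G.Adj x y)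
    (hz : G.Adj x z) (hab : a ≠ b) (hya : y ≠ a) (hyb : y ≠ b) (hzy : z ≠ y) :
    z = a ∨ z = b := by
  have hN : {y, a, b} = G.neighborSet x :=
    Set.eq_of_subset_of_ncard_le (by simp [Set.insert_subset_iff, ha, hb, hy])
      (hx.trans (Set.ncard_eq_three.mpr ⟨y, a, b, hya, hyb, hab, rfl⟩).ge)
  have hz' : z ∈ ({y, a, b} : Set V) := hN ▸ hz
  simpa [hzy] using hz'

end SimpleGraph

theorem IsTriangleSet.two_le_ncard_neighborSet [Finite V] {t : Finset V}
    (ht : IsTriangleSet G t) {v : V} (hv : v ∈ t) : 2 ≤ (G.neighborSet v).ncard := by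
  classical
  obtain ⟨a, b, hab, hvab⟩ := card_eq_two.mp (show #(t.erase v) = 2 by
    rw [card_erase_of_mem hv, ht.1])
  have hadj : ∀ w ∈ t.erase v, G.Adj v w := fun w hw =>
    ht.2 v hv w (mem_of_mem_erase hw) (ne_of_mem_erase hw).symm
  exact SimpleGraph.two_le_ncard_neighborSet (hadj a (by simp [hvab])) (hadj b (by simp [hvab])) hab

theorem IsTriangleSet.exists_mem_ne_ne {t : Finset V} (ht : IsTriangleSet G t) (x y : V) :
    ∃ z ∈ t, z ≠ x ∧ z ≠ y := by
  classical
  by_contra! h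
  have hsub : t ⊆ {x, y} := fun z hz => by
    by_cases hzx : z = x
    · simp [hzx]
    · simp [h z hz hzx]
  have := card_le_card hsub
  have := card_le_two (a := x) (b := y)
  have := ht.1
  omega

theorem ncard_setOf_two_le_eq_three_mul [Finite V]
    (h : ∀ v, 2 ≤ (G.neighborSet v).ncard → ∃! t, IsTriangleSet G t ∧ v ∈ t) :
    {v | 2 ≤ (G.neighborSet v).ncard}.ncard = 3 * {t | IsTriangleSet G t}.ncard := by
  refine Set.ncard_eq_mul_ncard_of_existsUnique (r := fun v t => v ∈ t) h fun t ht => ?_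
  have hset : {v | v ∈ {v | 2 ≤ (G.neighborSet v).ncard} ∧ v ∈ t} = (t : Set V) := by
    ext v
    simpa using ht.two_le_ncard_neighborSet
  rw [hset, Set.ncard_coe_finset, ht.1]

namespace IsLambdaFactor

variable {P : Set (V × V × V)}

theorem eq_of_mem (hP : IsLambdaFactor G P) {p q : V × V × V} {v : V} (hp : p ∈ P)
    (hq : q ∈ P) (hvp : v = p.1 ∨ v = p.2.1 ∨ v = p.2.2)
    (hvq : v = q.1 ∨ v = q.2.1 ∨ v = q.2.2) : p = q :=
  (hP.2 v).unique ⟨hp, hvp⟩ ⟨hq, hvq⟩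

theorem card_eq_three_mul_ncard [Finite V] (hP : IsLambdaFactor G P) :
    Nat.card V = 3 * P.ncard := by
  rw [← Set.ncard_univ]
  refine Set.ncard_eq_mul_ncard_of_existsUnique
    (r := fun v p => v = p.1 ∨ v = p.2.1 ∨ v = p.2.2) (fun v _ => hP.2 v) fun p hp => ?_
  obtain ⟨h1, h2, h3⟩ := hP.1 p hp
  have hset : {v | v ∈ Set.univ ∧ (v = p.1 ∨ v = p.2.1 ∨ v = p.2.2)} = {p.1, p.2.1, p.2.2} := by
    ext
    simp
  rw [hset, Set.ncard_eq_three]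
  exact ⟨_, _, _, h1.ne, h3, h2.ne, rfl⟩

theorem exists_adj (hP : IsLambdaFactor G P) (v : V) : ∃ w, G.Adj v w := by
  obtain ⟨p, ⟨hp, hv⟩, -⟩ := hP.2 v
  obtain ⟨h1, h2, -⟩ := hP.1 p hp
  rcases hv with rfl | rfl | rfl
  exacts [⟨_, h1⟩, ⟨_, h2⟩, ⟨_, h2.symm⟩]

theorem compl_setOf_ncard_neighborSet_eq_one [Finite V] (hP : IsLambdaFactor G P) :
    {v | (G.neighborSet v).ncard = 1}ᶜ = {v | 2 ≤ (G.neighborSet v).ncard} := by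
  ext v
  obtain ⟨w, hw⟩ := hP.exists_adj v
  have : 0 < (G.neighborSet v).ncard := (Set.ncard_pos (Set.toFinite _)).mpr ⟨w, hw⟩
  simp only [Set.mem_compl_iff, Set.mem_ofPred_eq]
  omega

theorem eq_end_of_adj_middle [Finite V] (hP : IsLambdaFactor G P) {p q : V × V × V} {z : V}
    (hp : p ∈ P) (hq : q ∈ P) (hpq : p ≠ q) (hdeg : (G.neighborSet p.2.1).ncard ≤ 3)
    (hxy : G.Adj p.2.1 q.2.1) (hz : G.Adj p.2.1 z) (hzy : z ≠ q.2.1) : z = p.1 ∨ z = p.2.2 := by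
  obtain ⟨h1, h2, h3⟩ := hP.1 p hp
  refine eq_or_eq_of_adj_of_ncard_neighborSet_le_three hdeg h1.symm h2 hxy hz h3 ?_ ?_ hzy
  · exact fun h => hpq (hP.eq_of_mem hp hq (.inl h) (.inr (.inl rfl)))
  · exact fun h => hpq (hP.eq_of_mem hp hq (.inr (.inr h)) (.inr (.inl rfl)))

theorem eq_of_middle_mem_triangle [Finite V] (hP : IsLambdaFactor G P)
    (hdeg : ∀ v, (G.neighborSet v).ncard ≤ 3) {p q : V × V × V} {t : Finset V} (hp : p ∈ P)
    (hq : q ∈ P) (ht : IsTriangleSet G t) (hpt : p.2.1 ∈ t) (hqt : q.2.1 ∈ t) : p = q := by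
  by_contra hpq
  have hxy : p.2.1 ≠ q.2.1 := fun h =>
    hpq (hP.eq_of_mem hp hq (.inr (.inl rfl)) (.inr (.inl h)))
  obtain ⟨z, hzt, hzx, hzy⟩ := ht.exists_mem_ne_ne p.2.1 q.2.1
  have hzp := hP.eq_end_of_adj_middle hp hq hpq (hdeg _) (ht.2 _ hpt _ hqt hxy)
    (ht.2 _ hpt _ hzt hzx.symm) hzy
  have hzq := hP.eq_end_of_adj_middle hq hp (Ne.symm hpq) (hdeg _) (ht.2 _ hqt _ hpt hxy.symm)
    (ht.2 _ hqt _ hzt hzy.symm) hzx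
  exact hpq (hP.eq_of_mem hp hq (hzp.imp_right .inr) (hzq.imp_right .inr))

theorem ncard_le_ncard_setOf_isTriangleSet [Finite V] (hP : IsLambdaFactor G P)
    (hdeg : ∀ v, (G.neighborSet v).ncard ≤ 3)
    (htri : ∀ v, 2 ≤ (G.neighborSet v).ncard → ∃ t, IsTriangleSet G t ∧ v ∈ t) :
    P.ncard ≤ {t | IsTriangleSet G t}.ncard := by
  classical
  have := Fintype.ofFinite V
  rw [Set.ncard_eq_toFinset_card' P, Set.ncard_eq_toFinset_card' {t | IsTriangleSet G t}]
  refine card_le_card_of_forall_subsingleton (fun p t => p.2.1 ∈ t) (fun p hp => ?_)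
    fun t ht p hp q hq => ?_
  · obtain ⟨h1, h2, h3⟩ := hP.1 p (by simpa using hp)
    simpa using htri _ (two_le_ncard_neighborSet h1.symm h2 h3)
  · simp only [Set.mem_toFinset, Set.mem_ofPred_eq, Set.toFinset_ofPred, mem_filter, mem_univ,
      true_and] at hp hq ht
    exact hP.eq_of_middle_mem_triangle hdeg hp.1 hq.1 ht hp.2 hq.2

end IsLambdaFactor

end

theorem stmt_11_general {V : Type*} [Fintype V] (A : SimpleGraph V)
    (hc2 : ∀ v : V, (A.neighborSet v).ncard ≤ 3)
    (hc3 : ∀ v : V, (A.neighborSet v).ncard = 2 ∨ (A.neighborSet v).ncard = 3 →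
      ∃! t : Finset V, IsTriangleSet A t ∧ v ∈ t)
    (hc4 : ({v : V | (A.neighborSet v).ncard = 1}).ncard = 3) :
    ¬ HasLambdaFactor A := by
  rintro ⟨P, hP⟩
  have hc3' : ∀ v, 2 ≤ (A.neighborSet v).ncard → ∃! t, IsTriangleSet A t ∧ v ∈ t :=
    fun v hv => hc3 v (by have := hc2 v; omega)
  have hpaths := hP.card_eq_three_mul_ncard
  have htriangles := ncard_setOf_two_le_eq_three_mul hc3'
  have hsplit := Set.ncard_add_ncard_compl {v | (A.neighborSet v).ncard = 1}
  rw [hP.compl_setOf_ncard_neighborSet_eq_one, hc4] at hsplit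
  have hle := hP.ncard_le_ncard_setOf_isTriangleSet hc2 fun v hv => (hc3' v hv).exists
  omega

/-- if `A` is a connected graph of maximum degree at most 3 in which
every vertex of degree 2 or 3 lies in exactly one triangle and which has exactly
three vertices of degree 1, then `A` has no `Λ`-factor. -/
theorem stmt_11 {V : Type*} [Fintype V] (A : SimpleGraph V)
    (hc1 : A.Connected)
    (hc2 : ∀ v : V, (A.neighborSet v).ncard ≤ 3)
    (hc3 : ∀ v : V, (A.neighborSet v).ncard = 2 ∨ (A.neighborSet v).ncard = 3 →
      ∃! t : Finset V, IsTriangleSet A t ∧ v ∈ t)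
    (hc4 : ({v : V | (A.neighborSet v).ncard = 1}).ncard = 3) :
    ¬ HasLambdaFactor A :=
  stmt_11_general A hc2 hc3 hc4
end

section
/- Let F be a cubic 2-connected graph and let G = F^Δ be the graph obtained from F by replacing each vertex of F by a triangle. Then for every set E of two edges of G, the graph G − E (obtained from G by deleting the edges of E) has a Λ-factor. -/
open SimpleGraph

/-!
If no triangle of `F^Δ` loses two edges, every triangle still contains a 3-vertex path, and
these paths form a `Λ`-factor. Otherwise both deleted edges lie in the triangle of one vertex `v`
of `F` and share an end `z`. As `F - v` is connected, the edge of `F` carried by `z` lies on a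
cycle `C` of `F`, which we orient so that `z` is one of its darts. Every vertex `u` of `C` then
hands its outgoing dart to the block of the next vertex: its own block is the path
`d — d.symm — f`, where `d` is the dart of `C` entering `u` and `f` is the third dart at `u`.
These blocks, together with paths in the untouched triangles, use no triangle edge at an
outgoing dart of `C`, in particular neither deleted edge.
-/

def IsThreePath {α : Type*} (G : SimpleGraph α) (t : α × α × α) : Prop :=
  G.Adj t.1 t.2.1 ∧ G.Adj t.2.1 t.2.2 ∧ t.1 ≠ t.2.2

theorem hasLambdaFactor_of_fibers {α ι : Type*} {G : SimpleGraph α} (φ : α → ι)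
    (h : ∀ i, ∃ t : α × α × α, IsThreePath G t ∧
      ∀ a, (a = t.1 ∨ a = t.2.1 ∨ a = t.2.2) ↔ φ a = i) :
    HasLambdaFactor G := by
  choose t hpath hfiber using h
  refine ⟨Set.range t, Set.forall_mem_range.2 hpath, fun a =>
    ⟨t (φ a), ⟨⟨_, rfl⟩, (hfiber _ a).2 rfl⟩, ?_⟩⟩
  rintro _ ⟨⟨i, rfl⟩, ha⟩
  rw [(hfiber i a).1 ha]

theorem exists_isThreePath_deleteEdges_of_triangle {α : Type*} {G : SimpleGraph α}
    {E : Set (Sym2 α)} {p q r : α} (hpq : G.Adj p q) (hqr : G.Adj q r) (hrp : G.Adj r p)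
    (hE : (E ∩ {s(p, q), s(q, r), s(r, p)}).Subsingleton) :
    ∃ t : α × α × α, IsThreePath (G.deleteEdges E) t ∧
      ∀ a, (a = t.1 ∨ a = t.2.1 ∨ a = t.2.2) ↔ (a = p ∨ a = q ∨ a = r) := by
  have hne : s(p, q) ≠ s(q, r) ∧ s(q, r) ≠ s(r, p) ∧ s(r, p) ≠ s(p, q) := by
    refine ⟨?_, ?_, ?_⟩ <;> simp [hpq.ne, hqr.ne, hrp.ne, hpq.ne.symm, hqr.ne.symm, hrp.ne.symm]
  by_cases hpqE : s(p, q) ∈ E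
  · have hqrE : s(q, r) ∉ E := fun h => hne.1 (hE ⟨hpqE, by simp⟩ ⟨h, by simp⟩)
    have hrpE : s(r, p) ∉ E := fun h => hne.2.2 (hE ⟨h, by simp⟩ ⟨hpqE, by simp⟩)
    exact ⟨(q, r, p), ⟨deleteEdges_adj.2 ⟨hqr, hqrE⟩, deleteEdges_adj.2 ⟨hrp, hrpE⟩,
      hpq.ne.symm⟩, fun a => by tauto⟩
  · by_cases hqrE : s(q, r) ∈ E
    · have hrpE : s(r, p) ∉ E := fun h => hne.2.1 (hE ⟨hqrE, by simp⟩ ⟨h, by simp⟩)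
      exact ⟨(r, p, q), ⟨deleteEdges_adj.2 ⟨hrp, hrpE⟩, deleteEdges_adj.2 ⟨hpq, hpqE⟩,
        hqr.ne.symm⟩, fun a => by tauto⟩
    · exact ⟨(p, q, r), ⟨deleteEdges_adj.2 ⟨hpq, hpqE⟩, deleteEdges_adj.2 ⟨hqr, hqrE⟩,
        hrp.ne.symm⟩, fun a => Iff.rfl⟩

namespace SimpleGraph.Walk

variable {V : Type*} {G : SimpleGraph V} {u v w : V}

theorem IsTrail.symm_notMem_darts {p : G.Walk u v} (hp : p.IsTrail) {d : G.Dart}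
    (hd : d ∈ p.darts) : d.symm ∉ p.darts := fun hs =>
  d.symm_ne <| List.inj_on_of_nodup_map (by rw [← edges_eq_map_darts]; exact hp.edges_nodup)
    hs hd d.edge_symm

theorem IsCycle.eq_of_mem_darts_of_snd_eq {c : G.Walk u u} (hc : c.IsCycle) {d d' : G.Dart}
    (hd : d ∈ c.darts) (hd' : d' ∈ c.darts) (h : d.snd = d'.snd) : d = d' :=
  List.inj_on_of_nodup_map (by rw [map_snd_darts]; exact hc.support_nodup) hd hd' h

theorem IsCycle.eq_of_mem_darts_of_fst_eq {c : G.Walk u u} (hc : c.IsCycle) {d d' : G.Dart}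
    (hd : d ∈ c.darts) (hd' : d' ∈ c.darts) (h : d.fst = d'.fst) : d = d' :=
  List.inj_on_of_nodup_map (by rw [map_fst_darts]; exact hc.nodup_dropLast_support) hd hd' h

theorem exists_mem_darts_snd_eq {c : G.Walk u u} (hc : ¬c.Nil) (hw : w ∈ c.support) :
    ∃ d ∈ c.darts, d.snd = w := by
  have hw' : w ∈ c.support.tail := by
    rw [← cons_tail_support, List.mem_cons] at hw
    rcases hw with rfl | hw
    · exact end_mem_tail_support hc
    · exact hw
  rw [← map_snd_darts, List.mem_map] at hw'
  exact hw'

theorem exists_mem_darts_fst_eq {c : G.Walk u u} (hc : ¬c.Nil) (hw : w ∈ c.support) :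
    ∃ d ∈ c.darts, d.fst = w := by
  obtain ⟨d, hd, rfl⟩ := exists_mem_darts_snd_eq (c := c.reverse) (by simpa using hc)
    (by simpa using hw)
  exact ⟨d.symm, mem_darts_reverse.1 hd, rfl⟩

end SimpleGraph.Walk

namespace SimpleGraph

variable {V : Type*} {G : SimpleGraph V}

theorem reachable_deleteEdges_of_connected_induce_compl {v w x : V} (hx : G.Adj v x)
    (hxw : x ≠ w) (hw : w ≠ v) (hconn : (G.induce {v}ᶜ).Connected) :
    (G.deleteEdges {s(v, w)}).Reachable v w := by
  let f : G.induce {v}ᶜ →g G.deleteEdges {s(v, w)} :=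
    ⟨Subtype.val, fun {a b} hab => deleteEdges_adj.2 ⟨hab, fun he => by
      rcases Sym2.mem_iff.1 (Set.mem_singleton_iff.1 he ▸ Sym2.mem_mk_left v w) with h | h
      exacts [a.2 h.symm, b.2 h.symm]⟩⟩
  have hreach : (G.deleteEdges {s(v, w)}).Reachable x w :=
    (hconn.preconnected ⟨x, Set.mem_compl_singleton_iff.2 hx.ne'⟩
      ⟨w, Set.mem_compl_singleton_iff.2 hw⟩).map f
  refine Adj.reachable (deleteEdges_adj.2 ⟨hx, ?_⟩) |>.trans hreach
  rw [Set.mem_singleton_iff, Sym2.congr_right]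
  exact hxw

theorem exists_isCycle_mem_darts (z : G.Dart) {x : V} (hx : G.Adj z.fst x) (hxz : x ≠ z.snd)
    (hconn : (G.induce {z.fst}ᶜ).Connected) :
    ∃ (u : V) (c : G.Walk u u), c.IsCycle ∧ z ∈ c.darts := by
  obtain ⟨u, c, hc, hzc⟩ := adj_and_reachable_delete_edges_iff_exists_cycle.1
    ⟨z.adj, reachable_deleteEdges_of_connected_induce_compl hx hxz z.snd_ne_fst hconn⟩
  obtain ⟨d, hd, hdz⟩ := List.mem_map.1 (c.edges_eq_map_darts ▸ hzc)
  rcases (dart_edge_eq_iff d z).1 hdz with rfl | rfl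
  · exact ⟨u, c, hc, hd⟩
  · exact ⟨u, c.reverse, hc.reverse, Walk.mem_darts_reverse.2 hd⟩

end SimpleGraph

section Cubic

variable {V : Type*} {F : SimpleGraph V}

theorem CubicGraph.exists_third_dart (hF : CubicGraph F) {a b : F.Dart} (hab : a ≠ b)
    (hfst : a.fst = b.fst) :
    ∃ c : F.Dart, c.fst = a.fst ∧ c ≠ a ∧ c ≠ b ∧
      ∀ d : F.Dart, d.fst = a.fst → d = a ∨ d = b ∨ d = c := by
  have hsnd : a.snd ≠ b.snd := fun h => hab (Dart.ext _ _ (Prod.ext hfst h))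
  obtain ⟨w, hw, hwab⟩ := Set.exists_mem_notMem_of_ncard_lt_ncard
    (s := {a.snd, b.snd}) (t := F.neighborSet a.fst) (by rw [Set.ncard_pair hsnd, hF]; norm_num)
  simp only [Set.mem_insert_iff, Set.mem_singleton_iff, not_or] at hwab
  have hN : {a.snd, b.snd, w} = F.neighborSet a.fst := by
    refine Set.eq_of_subset_of_ncard_le ?_ ?_ (Set.finite_of_ncard_ne_zero (by rw [hF]; norm_num))
    · rintro y (rfl | rfl | rfl)
      exacts [a.adj, hfst ▸ b.adj, hw]
    · rw [hF, Set.ncard_eq_three.2 ⟨_, _, _, hsnd, Ne.symm hwab.1, Ne.symm hwab.2, rfl⟩]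
  refine ⟨⟨(a.fst, w), hw⟩, rfl, fun h => hwab.1 (congrArg (·.snd) h),
    fun h => hwab.2 (congrArg (·.snd) h), fun d hd => ?_⟩
  have hdN : d.snd ∈ F.neighborSet a.fst := hd ▸ d.adj
  rw [← hN] at hdN
  rcases hdN with h | h | h
  · exact Or.inl (Dart.ext _ _ (Prod.ext hd h))
  · exact Or.inr (Or.inl (Dart.ext _ _ (Prod.ext (hd.trans hfst) h)))
  · exact Or.inr (Or.inr (Dart.ext _ _ (Prod.ext hd h)))

theorem CubicGraph.exists_darts_fst_eq (hF : CubicGraph F) (u : V) :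
    ∃ p q r : F.Dart, p ≠ q ∧ q ≠ r ∧ r ≠ p ∧
      ∀ d : F.Dart, d.fst = u ↔ d = p ∨ d = q ∨ d = r := by
  obtain ⟨x, y, z, hxy, -, -, hN⟩ := Set.ncard_eq_three.1 (hF u)
  let p : F.Dart := ⟨(u, x), show x ∈ F.neighborSet u by simp [hN]⟩
  let q : F.Dart := ⟨(u, y), show y ∈ F.neighborSet u by simp [hN]⟩
  obtain ⟨r, hr, hrp, hrq, hcov⟩ :=
    hF.exists_third_dart (a := p) (b := q) (fun h => hxy (congrArg (·.snd) h)) rfl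
  refine ⟨p, q, r, fun h => hxy (congrArg (·.snd) h), hrq.symm, hrp, fun d => ⟨hcov d, ?_⟩⟩
  rintro (rfl | rfl | rfl)
  exacts [rfl, rfl, hr]

theorem CubicGraph.exists_common_dart (hF : CubicGraph F) {v : V} {e e' : Sym2 F.Dart}
    (he : e ∈ (TriangleReplacement F).edgeSet) (he' : e' ∈ (TriangleReplacement F).edgeSet)
    (hv : ∀ a ∈ e, a.fst = v) (hv' : ∀ a ∈ e', a.fst = v) :
    ∃ z, z ∈ e ∧ z ∈ e' := by
  induction e using Sym2.ind with | h a b => ?_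
  induction e' using Sym2.ind with | h a' b' => ?_
  by_contra! h
  obtain ⟨f, -, -, -, hcov⟩ := hF.exists_third_dart ((mem_edgeSet _).1 he).ne
    ((hv a (Sym2.mem_mk_left _ _)).trans (hv b (Sym2.mem_mk_right _ _)).symm)
  have hf : ∀ x ∈ s(a', b'), x = f := fun x hx => by
    rcases hcov x ((hv' x hx).trans (hv a (Sym2.mem_mk_left _ _)).symm) with rfl | rfl | rfl
    exacts [(h _ (Sym2.mem_mk_left _ _) hx).elim, (h _ (Sym2.mem_mk_right _ _) hx).elim, rfl]
  exact ((mem_edgeSet _).1 he').ne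
    ((hf a' (Sym2.mem_mk_left _ _)).trans (hf b' (Sym2.mem_mk_right _ _)).symm)

end Cubic

namespace TriangleReplacement

variable {V : Type*} {F : SimpleGraph V} {E : Set (Sym2 F.Dart)}

theorem adj_of_fst_eq_s13 {a b : F.Dart} (hab : a ≠ b) (h : a.fst = b.fst) :
    (TriangleReplacement F).Adj a b :=
  ⟨hab, Or.inl h⟩

theorem adj_symm (a : F.Dart) : (TriangleReplacement F).Adj a a.symm :=
  ⟨a.symm_ne.symm, Or.inr rfl⟩

theorem deleteEdges_adj_symm (hE : ∀ e ∈ E, ∃ v, ∀ a ∈ e, a.fst = v)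
    (d : F.Dart) : ((TriangleReplacement F).deleteEdges E).Adj d d.symm := by
  refine deleteEdges_adj.2 ⟨adj_symm d, fun he => ?_⟩
  obtain ⟨v, hv⟩ := hE _ he
  exact d.fst_ne_snd ((hv d (Sym2.mem_mk_left _ _)).trans (hv d.symm (Sym2.mem_mk_right _ _)).symm)

theorem exists_isThreePath_deleteEdges_fst_eq (hF : CubicGraph F) (u : V)
    (hE : {e ∈ E | ∀ a ∈ e, a.fst = u}.Subsingleton) :
    ∃ t : F.Dart × F.Dart × F.Dart, IsThreePath ((TriangleReplacement F).deleteEdges E) t ∧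
      ∀ a, (a = t.1 ∨ a = t.2.1 ∨ a = t.2.2) ↔ a.fst = u := by
  obtain ⟨p, q, r, hpq, hqr, hrp, hpqr⟩ := hF.exists_darts_fst_eq u
  have hp : p.fst = u := (hpqr p).2 (Or.inl rfl)
  have hq : q.fst = u := (hpqr q).2 (Or.inr (Or.inl rfl))
  have hr : r.fst = u := (hpqr r).2 (Or.inr (Or.inr rfl))
  have hsub : E ∩ {s(p, q), s(q, r), s(r, p)} ⊆ {e ∈ E | ∀ a ∈ e, a.fst = u} := by
    rintro e ⟨he, h⟩
    refine ⟨he, ?_⟩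
    rcases h with rfl | rfl | rfl <;> simp [hp, hq, hr]
  obtain ⟨t, ht, htm⟩ := exists_isThreePath_deleteEdges_of_triangle
    (adj_of_fst_eq_s13 hpq (hp.trans hq.symm))
    (adj_of_fst_eq_s13 hqr (hq.trans hr.symm))
    (adj_of_fst_eq_s13 hrp (hr.trans hp.symm)) (hE.anti hsub)
  exact ⟨t, ht, fun a => (htm a).trans (hpqr a).symm⟩

theorem hasLambdaFactor_deleteEdges_of_subsingleton (hF : CubicGraph F)
    (hE : ∀ u, {e ∈ E | ∀ a ∈ e, a.fst = u}.Subsingleton) :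
    HasLambdaFactor ((TriangleReplacement F).deleteEdges E) :=
  hasLambdaFactor_of_fibers (·.fst) fun u => exists_isThreePath_deleteEdges_fst_eq hF u (hE u)

theorem hasLambdaFactor_deleteEdges_of_isCycle (hF : CubicGraph F) {w : V} {c : F.Walk w w}
    (hc : c.IsCycle) (hE : ∀ e ∈ E, ∃ d ∈ c.darts, d ∈ e ∧ ∀ a ∈ e, a.fst = d.fst) :
    HasLambdaFactor ((TriangleReplacement F).deleteEdges E) := by
  classical
  refine hasLambdaFactor_of_fibers (fun a => if a ∈ c.darts then a.snd else a.fst) fun u => ?_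
  by_cases hu : u ∈ c.support
  · obtain ⟨d, hd, rfl⟩ := c.exists_mem_darts_snd_eq hc.not_nil hu
    obtain ⟨o, ho, hod⟩ := c.exists_mem_darts_fst_eq hc.not_nil hu
    have hdc : d.symm ∉ c.darts := hc.isTrail.symm_notMem_darts hd
    have hdo : d.symm ≠ o := fun h => hdc (h ▸ ho)
    obtain ⟨f, hf, hfd, hfo, hcov⟩ := hF.exists_third_dart hdo hod.symm
    have hfc : f ∉ c.darts := fun h => hfo (hc.eq_of_mem_darts_of_fst_eq h ho (hf.trans hod.symm))
    have hfE : s(d.symm, f) ∉ E := by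
      intro he
      obtain ⟨d', hd', hd'e, hfst⟩ := hE _ he
      obtain rfl : d' = o :=
        hc.eq_of_mem_darts_of_fst_eq hd' ho ((hfst _ (Sym2.mem_mk_left _ _)).symm.trans hod.symm)
      rcases Sym2.mem_iff.1 hd'e with h | h
      exacts [hdo h.symm, hfo h.symm]
    refine ⟨(d, d.symm, f), ⟨deleteEdges_adj_symm (fun e he => ?_) d,
      deleteEdges_adj.2 ⟨adj_of_fst_eq_s13 hfd.symm hf.symm, hfE⟩,
      fun h => d.fst_ne_snd ((congrArg (·.fst) h).trans hf)⟩, fun a => ⟨?_, ?_⟩⟩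
    · obtain ⟨d', -, -, h⟩ := hE e he
      exact ⟨d'.fst, h⟩
    · rintro (rfl | rfl | rfl)
      · exact if_pos hd
      · exact if_neg hdc
      · exact (if_neg hfc).trans hf
    · split_ifs with ha
      · exact fun h => Or.inl (hc.eq_of_mem_darts_of_snd_eq ha hd h)
      · intro h
        rcases hcov a h with h | h | h
        · exact Or.inr (Or.inl h)
        · exact absurd (h ▸ ho) ha
        · exact Or.inr (Or.inr h)
  · obtain ⟨t, ht, htm⟩ := exists_isThreePath_deleteEdges_fst_eq hF u (E := E) fun e he => by
      obtain ⟨d, hd, hde, -⟩ := hE e he.1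
      exact absurd (he.2 d hde ▸ c.dart_fst_mem_support_of_mem_darts hd) hu
    refine ⟨t, ht, fun a => (htm a).trans ?_⟩
    split_ifs with ha
    · exact iff_of_false (fun h => hu (h ▸ c.dart_fst_mem_support_of_mem_darts ha))
        (fun h => hu (h ▸ c.dart_snd_mem_support_of_mem_darts ha))
    · exact Iff.rfl

end TriangleReplacement

theorem stmt_13_general {V : Type*} (F : SimpleGraph V)
    (hcubic : CubicGraph F) (hconn : KConnected 2 F)
    (E : Set (Sym2 F.Dart)) (hE : E ⊆ (TriangleReplacement F).edgeSet)
    (hcard : E.ncard = 2) :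
    HasLambdaFactor ((TriangleReplacement F).deleteEdges E) := by
  obtain ⟨ε₁, ε₂, hne, rfl⟩ := Set.ncard_eq_two.1 hcard
  by_cases hsame : ∃ v, ∀ e ∈ ({ε₁, ε₂} : Set (Sym2 F.Dart)), ∀ a ∈ e, a.fst = v
  · obtain ⟨v, hv⟩ := hsame
    obtain ⟨z, hz₁, hz₂⟩ := hcubic.exists_common_dart (hE (.inl rfl)) (hE (.inr rfl))
      (hv _ (.inl rfl)) (hv _ (.inr rfl))
    have hzv : z.fst = v := hv _ (.inl rfl) z hz₁
    obtain ⟨x, hx, hxz⟩ :=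
      Set.exists_ne_of_one_lt_ncard (s := F.neighborSet z.fst) (by rw [hcubic]; norm_num) z.snd
    obtain ⟨u, c, hc, hzc⟩ :=
      exists_isCycle_mem_darts z hx hxz (hconn.2 {z.fst} (by rw [Set.ncard_singleton]; norm_num))
    refine TriangleReplacement.hasLambdaFactor_deleteEdges_of_isCycle hcubic hc fun e he =>
      ⟨z, hzc, ?_, fun a ha => (hv e he a ha).trans hzv.symm⟩
    rcases he with rfl | rfl
    exacts [hz₁, hz₂]
  · refine TriangleReplacement.hasLambdaFactor_deleteEdges_of_subsingleton hcubic
      fun u e he e' he' => ?_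
    by_contra hee
    rcases he with ⟨rfl | rfl, he⟩ <;> rcases he' with ⟨rfl | rfl, he'⟩
    · exact hee rfl
    · exact hsame ⟨u, by rintro x (rfl | rfl); exacts [he, he']⟩
    · exact hsame ⟨u, by rintro x (rfl | rfl); exacts [he', he]⟩
    · exact hee rfl

/-- for `G = F^Δ` with `F` cubic and 2-connected, deleting any two
edges of `G` leaves a graph with a `Λ`-factor. -/
theorem stmt_13 {V : Type*} [Fintype V] (F : SimpleGraph V)
    (hcubic : CubicGraph F) (hconn : KConnected 2 F)
    (E : Set (Sym2 F.Dart)) (hE : E ⊆ (TriangleReplacement F).edgeSet)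
    (hcard : E.ncard = 2) :
    HasLambdaFactor ((TriangleReplacement F).deleteEdges E) :=
  stmt_13_general F hcubic hconn E hE hcard
end

section
/- Let G be a 3-connected graph and let xy be an edge of G. Then there exist two distinct vertices z1 and z2, each adjacent to y and distinct from x, such that for each i ∈ {1,2}, letting L_i be the 3-vertex path with vertices x, y, z_i and edges xy and yz_i, the graph G − L_i (obtained by deleting the three vertices of L_i and all incident edges) is connected. -/
open SimpleGraph

/-!
Fix `x`, `y` and a vertex `w` to be avoided. If `G - {x, y, z}` is disconnected for a neighbour
`z ∉ {x, w}` of `y`, take a component `C` of it avoiding `w`. Since `G - {x, z}` is connected, some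
edge leaves `C` there, necessarily towards `y`; so `C` contains a neighbour `z'` of `y`. If
`G - {x, y, z'}` is again disconnected, a component `D` of it avoiding `z` meets `C` (otherwise the
component of `G - {x, y, z}` through `D` would avoid `z'`, and, `G - {x, y}` being connected, it would
be joined to `z` inside `G - {x, y, z'}`), hence `D ⊂ C` because `z' ∈ C \ D`. The components shrink,
so the descent ends at a neighbour `z'` with `G - {x, y, z'}` connected. Since `y` has degree at least
three, the descent can start, once with `w = x` and once with `w = z₁`.
-/

namespace SimpleGraph

variable {V : Type*} {G : SimpleGraph V} {A B B' : Set V} {u v w p q t : V}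

/-- The vertex set of the component of `u` in `G.induce B`, empty if `u ∉ B`. -/
def componentIn (G : SimpleGraph V) (B : Set V) (u : V) : Set V :=
  {v | ∃ (hu : u ∈ B) (hv : v ∈ B), (G.induce B).Reachable ⟨u, hu⟩ ⟨v, hv⟩}

lemma mem_componentIn_self (hu : u ∈ B) : u ∈ G.componentIn B u :=
  ⟨hu, hu, .rfl⟩

lemma componentIn_subset : G.componentIn B u ⊆ B :=
  fun _ h => h.2.1

lemma mem_componentIn_comm : v ∈ G.componentIn B u ↔ u ∈ G.componentIn B v :=
  ⟨fun ⟨hu, hv, h⟩ => ⟨hv, hu, h.symm⟩, fun ⟨hv, hu, h⟩ => ⟨hu, hv, h.symm⟩⟩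

lemma mem_componentIn_trans (h : v ∈ G.componentIn B u) (h' : t ∈ G.componentIn B v) :
    t ∈ G.componentIn B u :=
  ⟨h.1, h'.2.1, h.2.2.trans h'.2.2⟩

lemma componentIn_eq_of_mem (h : v ∈ G.componentIn B u) :
    G.componentIn B v = G.componentIn B u :=
  Set.ext fun _ => ⟨mem_componentIn_trans h, mem_componentIn_trans (mem_componentIn_comm.1 h)⟩

lemma mem_componentIn_of_adj (hq : q ∈ G.componentIn B u) (hp : p ∈ B) (hqp : G.Adj q p) :
    p ∈ G.componentIn B u :=
  mem_componentIn_trans hq ⟨hq.2.1, hp, Adj.reachable (by exact hqp)⟩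

lemma componentIn_subset_componentIn (h : G.componentIn B u ⊆ B') :
    G.componentIn B u ⊆ G.componentIn B' u := by
  rintro v ⟨hu, hv, ⟨W⟩⟩
  suffices ∀ {a b : B}, (G.induce B).Walk a b → (a : V) ∈ G.componentIn B u →
      (a : V) ∈ G.componentIn B' u → (b : V) ∈ G.componentIn B' u from
    this W (mem_componentIn_self hu) (mem_componentIn_self (h (mem_componentIn_self hu)))
  intro a b W
  induction W with
  | nil => exact fun _ h => h
  | cons hadj _ ih =>
    intro ha ha'
    have hs := mem_componentIn_of_adj ha (Subtype.mem _) hadj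
    exact ih hs (mem_componentIn_of_adj ha' (h hs) hadj)

lemma exists_adj_sdiff_of_not_mem_componentIn (hA : (G.induce A).Preconnected) (hBA : B ⊆ A)
    (hu : u ∈ B) (hv : v ∈ A) (hvu : v ∉ G.componentIn B u) :
    ∃ q ∈ G.componentIn B u, ∃ p ∈ A \ B, G.Adj q p := by
  obtain ⟨walk⟩ := hA ⟨u, hBA hu⟩ ⟨v, hv⟩
  obtain ⟨d, -, hd₁, hd₂⟩ :=
    walk.exists_boundary_dart {s | (s : V) ∈ G.componentIn B u} (mem_componentIn_self hu) hvu
  exact ⟨d.fst, hd₁, d.snd, ⟨d.snd.2, fun hB => hd₂ (mem_componentIn_of_adj hd₁ hB d.adj)⟩, d.adj⟩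

lemma exists_not_mem_componentIn (h : ¬(G.induce B).Preconnected) (t : V) :
    ∃ a ∈ B, ∃ b ∈ B, t ∉ G.componentIn B a ∧ b ∉ G.componentIn B a := by
  simp only [Preconnected, not_forall] at h
  obtain ⟨a, b, hab⟩ := h
  have hba : (b : V) ∉ G.componentIn B a := fun ⟨_, _, r⟩ => hab r
  by_cases hta : t ∈ G.componentIn B a
  · exact ⟨b, b.2, a, a.2, fun htb => hba (mem_componentIn_trans hta (mem_componentIn_comm.1 htb)),
      fun hab => hba (mem_componentIn_comm.1 hab)⟩
  · exact ⟨a, a.2, b, b.2, hta, hba⟩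

lemma connected_induce_iff_of_nonempty (hB : B.Nonempty) :
    (G.induce B).Connected ↔ (G.induce B).Preconnected :=
  have := hB.to_subtype
  ⟨Connected.preconnected, fun h => ⟨h⟩⟩

section DeleteThree

variable {x y z z' a : V}

lemma mem_compl_of_mem_componentIn (hyz : G.Adj y z) (hzx : z ≠ x)
    (hz' : z' ∈ G.componentIn {x, y, z}ᶜ u) : z ∈ ({x, y, z'}ᶜ : Set V) := by
  have := componentIn_subset hz'
  simp only [Set.mem_compl_iff, Set.mem_insert_iff, Set.mem_singleton_iff, not_or] at this ⊢
  exact ⟨hzx, hyz.ne', Ne.symm this.2.2⟩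

lemma exists_adj_mem_componentIn (hxz : (G.induce {x, z}ᶜ).Preconnected)
    (hu : u ∈ ({x, y, z}ᶜ : Set V)) (hv : v ∈ ({x, y, z}ᶜ : Set V))
    (hvu : v ∉ G.componentIn {x, y, z}ᶜ u) : ∃ z' ∈ G.componentIn {x, y, z}ᶜ u, G.Adj y z' := by
  obtain ⟨q, hq, p, hp, hqp⟩ := exists_adj_sdiff_of_not_mem_componentIn hxz
    (by intro; simp; tauto) hu (by simp at hv ⊢; tauto) hvu
  obtain rfl : p = y := by simp at hp; tauto
  exact ⟨q, hq, hqp.symm⟩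

lemma componentIn_ssubset_componentIn (hxy : (G.induce {x, y}ᶜ).Preconnected)
    (hyz : G.Adj y z) (hzx : z ≠ x) (hz' : z' ∈ G.componentIn {x, y, z}ᶜ u)
    (ha : a ∈ ({x, y, z'}ᶜ : Set V)) (hza : z ∉ G.componentIn {x, y, z'}ᶜ a) :
    G.componentIn {x, y, z'}ᶜ a ⊂ G.componentIn {x, y, z}ᶜ u := by
  have hsub : G.componentIn {x, y, z'}ᶜ a ⊆ {x, y, z}ᶜ := fun t ht => by
    have := componentIn_subset ht
    simp only [Set.mem_compl_iff, Set.mem_insert_iff, Set.mem_singleton_iff, not_or] at this ⊢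
    exact ⟨this.1, this.2.1, by rintro rfl; exact hza ht⟩
  have hau : a ∈ G.componentIn {x, y, z}ᶜ u := by
    by_contra hau
    have hsub' : G.componentIn {x, y, z}ᶜ a ⊆ {x, y, z'}ᶜ := fun t ht => by
      have := componentIn_subset ht
      simp only [Set.mem_compl_iff, Set.mem_insert_iff, Set.mem_singleton_iff, not_or] at this ⊢
      exact ⟨this.1, this.2.1, by
        rintro rfl; exact hau (mem_componentIn_trans hz' (mem_componentIn_comm.1 ht))⟩
    obtain ⟨q, hq, p, hp, hqp⟩ := exists_adj_sdiff_of_not_mem_componentIn (v := z) hxy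
      (by intro; simp; tauto) (hsub (mem_componentIn_self ha)) (by simp [hzx, hyz.ne'])
      (fun h => by simpa using componentIn_subset h)
    obtain rfl : p = z := by simp at hp; tauto
    exact hza (mem_componentIn_of_adj (componentIn_subset_componentIn hsub' hq)
      (mem_compl_of_mem_componentIn hyz hzx hz') hqp)
  refine (Set.ssubset_iff_of_subset ?_).2 ⟨z', hz', fun h => by simpa using componentIn_subset h⟩
  exact (componentIn_subset_componentIn hsub).trans (componentIn_eq_of_mem hau).subset

theorem exists_adj_connected_induce_compl_of_componentIn [Finite V]
    (hpre : ∀ v, (G.induce {x, v}ᶜ).Preconnected) (hyz : G.Adj y z) (hzx : z ≠ x)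
    (hu : u ∈ ({x, y, z}ᶜ : Set V)) (hv : v ∈ ({x, y, z}ᶜ : Set V))
    (hvu : v ∉ G.componentIn {x, y, z}ᶜ u) (hw : w ∉ G.componentIn {x, y, z}ᶜ u) :
    ∃ z', G.Adj y z' ∧ z' ≠ x ∧ z' ≠ w ∧ (G.induce {x, y, z'}ᶜ).Connected := by
  induction hn : (G.componentIn {x, y, z}ᶜ u).ncard using Nat.strong_induction_on
    generalizing z u v with
  | _ n ih =>
  obtain ⟨z', hz', hyz'⟩ := exists_adj_mem_componentIn (hpre z) hu hv hvu
  have hz'x : z' ≠ x := by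
    have := componentIn_subset hz'
    simp only [Set.mem_compl_iff, Set.mem_insert_iff, not_or] at this
    exact this.1
  have hz'w : z' ≠ w := by rintro rfl; exact hw hz'
  have hzB := mem_compl_of_mem_componentIn hyz hzx hz'
  by_cases hcon : (G.induce {x, y, z'}ᶜ).Connected
  · exact ⟨z', hyz', hz'x, hz'w, hcon⟩
  rw [connected_induce_iff_of_nonempty ⟨z, hzB⟩] at hcon
  obtain ⟨a, ha, b, hb, hza, hba⟩ := exists_not_mem_componentIn hcon z
  have hlt := componentIn_ssubset_componentIn (hpre y) hyz hzx hz' ha hza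
  exact ih _ (hn ▸ Set.ncard_lt_ncard hlt) hyz' hz'x ha hb hba (fun h => hw (hlt.1 h)) rfl

end DeleteThree

end SimpleGraph

section KConnected

variable {V : Type*} {G : SimpleGraph V} {k : ℕ}

lemma KConnected.finite (h : KConnected k G) : Finite V :=
  Nat.finite_of_card_ne_zero (by have := h.1; omega)

lemma KConnected.le_ncard_neighborSet (h : KConnected k G) (v : V) :
    k ≤ (G.neighborSet v).ncard := by
  have := h.finite
  by_contra! hlt
  have hcard := Set.ncard_add_ncard_compl (G.neighborSet v)
  have : Nontrivial ((G.neighborSet v)ᶜ : Set V) := by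
    rw [Set.nontrivial_coe_sort, ← Set.one_lt_ncard_iff_nontrivial]
    have := h.1
    omega
  obtain ⟨u, hu⟩ := (h.2 _ hlt).preconnected.exists_adj_of_nontrivial ⟨v, by simp⟩
  exact u.2 (by exact hu)

theorem KConnected.exists_adj_connected_induce_compl (h : KConnected 3 G) (x y w : V) :
    ∃ z, G.Adj y z ∧ z ≠ x ∧ z ≠ w ∧ (G.induce {x, y, z}ᶜ).Connected := by
  have := h.finite
  have hpre (v : V) : (G.induce {x, v}ᶜ).Preconnected :=
    (h.2 _ (by grw [Set.ncard_insert_le, Set.ncard_singleton]; omega)).preconnected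
  obtain ⟨z, hyz, hzxw⟩ : (G.neighborSet y \ {x, w}).Nonempty := by
    have := Set.le_ncard_sdiff {x, w} (G.neighborSet y)
    have := h.le_ncard_neighborSet y
    have : ({x, w} : Set V).ncard ≤ 2 := by grw [Set.ncard_insert_le, Set.ncard_singleton]
    exact Set.nonempty_of_ncard_ne_zero (by omega)
  simp only [Set.mem_insert_iff, Set.mem_singleton_iff, not_or] at hzxw
  by_cases hcon : (G.induce {x, y, z}ᶜ).Connected
  · exact ⟨z, hyz, hzxw.1, hzxw.2, hcon⟩
  have hne : ({x, y, z}ᶜ : Set V).Nonempty := by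
    have := Set.ncard_add_ncard_compl ({x, y, z} : Set V)
    have : ({x, y, z} : Set V).ncard ≤ 3 := by
      grw [Set.ncard_insert_le, Set.ncard_insert_le, Set.ncard_singleton]
    exact Set.nonempty_of_ncard_ne_zero (by have := h.1; omega)
  rw [connected_induce_iff_of_nonempty hne] at hcon
  obtain ⟨a, ha, b, hb, hwa, hba⟩ := exists_not_mem_componentIn hcon w
  exact exists_adj_connected_induce_compl_of_componentIn hpre hyz hzxw.1 ha hb hba hwa

end KConnected

theorem stmt_19_general {V : Type*} (G : SimpleGraph V)
    (hconn : KConnected 3 G) (x y : V) :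
    ∃ z₁ z₂ : V, z₁ ≠ z₂ ∧ z₁ ≠ x ∧ z₂ ≠ x ∧ G.Adj y z₁ ∧ G.Adj y z₂ ∧
      (G.induce ({x, y, z₁}ᶜ : Set V)).Connected ∧
      (G.induce ({x, y, z₂}ᶜ : Set V)).Connected := by
  obtain ⟨z₁, hyz₁, hz₁x, -, hz₁⟩ := hconn.exists_adj_connected_induce_compl x y x
  obtain ⟨z₂, hyz₂, hz₂x, hz₂z₁, hz₂⟩ := hconn.exists_adj_connected_induce_compl x y z₁
  exact ⟨z₁, z₂, hz₂z₁.symm, hz₁x, hz₂x, hyz₁, hyz₂, hz₁, hz₂⟩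

/-- if `G` is a 3-connected graph and `xy` an edge of `G`, then there
are two distinct neighbors `z₁, z₂` of `y`, both distinct from `x`, such that for the
3-vertex paths `Lᵢ = x-y-zᵢ` each `G − Lᵢ` is connected. -/
theorem stmt_19 {V : Type*} [Fintype V] (G : SimpleGraph V)
    (hconn : KConnected 3 G) (x y : V) (hxy : G.Adj x y) :
    ∃ z₁ z₂ : V, z₁ ≠ z₂ ∧ z₁ ≠ x ∧ z₂ ≠ x ∧ G.Adj y z₁ ∧ G.Adj y z₂ ∧
      (G.induce ({x, y, z₁}ᶜ : Set V)).Connected ∧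
      (G.induce ({x, y, z₂}ᶜ : Set V)).Connected :=
  stmt_19_general G hconn x y
end
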